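/- arXiv:math/0409519 — 8 statements merged into one kernel-verified Lean document; each statement's English description precedes it below -/
import Mathlib

section
/- Let R be a valuation ring, M an R-module, r ∈ R and y ∈ M such that ry ≠ 0. Then: (1) the annihilator of y equals r times the annihilator of ry, i.e. (0:y) = r·(0:ry); (2) if (0:y) ≠ 0, then (0:y) is a finitely generated ideal if and only if (0:ry) is a finitely generated ideal. -/
universe u

section Defs
variable (R : Type u) [CommRing R]

/-- A (generalized) valuation ring: a commutative ring whose ideals are totally
ordered by inclusion. -/
def IdealsTotallyOrdered : Prop := ∀ I J : Ideal R, I ≤ J ∨ J ≤ I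

/-- Almost maximal: every family of cosets `a i + L i` that is totally ordered by
inclusion and whose ideals have nonzero intersection has nonempty intersection. -/
def AlmostMaximalRing : Prop :=
  ∀ (ι : Type u) (a : ι → R) (L : ι → Ideal R),
    (∀ i j : ι, {x : R | x - a i ∈ L i} ⊆ {x : R | x - a j ∈ L j} ∨
      {x : R | x - a j ∈ L j} ⊆ {x : R | x - a i ∈ L i}) →
    (⨅ i, L i) ≠ ⊥ →
    (⋂ i, {x : R | x - a i ∈ L i}).Nonempty

/-- fp-injective (absolutely pure): `Ext¹(F, E) = 0` for every finitely presented `F`. -/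
def FpInjectiveModule (E : Type u) [AddCommGroup E] [Module R E] : Prop :=
  ∀ (F : Type u) [AddCommGroup F] [Module R F], Module.FinitePresentation R F →
    Subsingleton (((Ext R (ModuleCat.{u} R) 1).obj
      (Opposite.op (ModuleCat.of R F))).obj (ModuleCat.of R E))

/-- Locally injective: every homomorphism from a finitely generated submodule `A` of an
arbitrary module `B` into `E` extends to `B`. -/
def LocallyInjectiveModule (E : Type u) [AddCommGroup E] [Module R E] : Prop :=
  ∀ (B : Type u) [AddCommGroup B] [Module R B] (A : Submodule R B), A.FG →
    ∀ f : A →ₗ[R] E, ∃ g : B →ₗ[R] E, ∀ a : A, g a = f a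

/-- `f : M →ₗ[R] E` exhibits `E` as an injective hull of `M`: `E` is injective, `f` is an
embedding, and the image of `f` is an essential submodule of `E`. -/
def IsInjectiveHull {M E : Type u} [AddCommGroup M] [Module R M]
    [AddCommGroup E] [Module R E] (f : M →ₗ[R] E) : Prop :=
  Module.Injective R E ∧ Function.Injective f ∧
    ∀ K : Submodule R E, K ≠ ⊥ → K ⊓ LinearMap.range f ≠ ⊥

/-- An indecomposable module: nonzero, and no nontrivial direct-summand decomposition. -/
def IndecomposableModule (U : Type u) [AddCommGroup U] [Module R U] : Prop :=
  Nontrivial U ∧ ∀ N₁ N₂ : Submodule R U, IsCompl N₁ N₂ → N₁ = ⊥ ∨ N₂ = ⊥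

def CountablyGeneratedModule (M : Type u) [AddCommGroup M] [Module R M] : Prop :=
  ∃ s : Set M, s.Countable ∧ Submodule.span R s = ⊤

/-- An IF-ring: every injective module is flat. -/
def IsIFRing : Prop :=
  ∀ (M : Type u) [AddCommGroup M] [Module R M], Module.Injective R M → Module.Flat R M

/-- Countably cogenerated: embeds in a product of countably many injective hulls of
simple modules. -/
def CountablyCogeneratedModule (M : Type u) [AddCommGroup M] [Module R M] : Prop :=
  ∃ (S : ℕ → Type u) (_ : ∀ n, AddCommGroup (S n)) (_ : ∀ n, Module R (S n)),
    (∀ n, Module.Injective R (S n)) ∧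
    (∀ n, ∃ T : Submodule R (S n), IsSimpleModule R T ∧
       ∀ K : Submodule R (S n), K ≠ ⊥ → K ⊓ T ≠ ⊥) ∧
    ∃ f : M →ₗ[R] (∀ n, S n), Function.Injective f

/-- A uniserial module: submodules totally ordered by inclusion. -/
def UniserialModule (U : Type u) [AddCommGroup U] [Module R U] : Prop :=
  ∀ N₁ N₂ : Submodule R U, N₁ ≤ N₂ ∨ N₂ ≤ N₁

/-- A uniform module: any two nonzero submodules intersect nontrivially. -/
def UniformModule (U : Type u) [AddCommGroup U] [Module R U] : Prop :=
  ∀ N₁ N₂ : Submodule R U, N₁ ≠ ⊥ → N₂ ≠ ⊥ → N₁ ⊓ N₂ ≠ ⊥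

end Defs

/-- In a ring with totally ordered ideals, every f.g. ideal is principal. -/
lemma principal_of_fg_aux {R : Type u} [CommRing R] (hval : IdealsTotallyOrdered R)
    (I : Ideal R) (hI : I.FG) : ∃ a : R, I = Ideal.span {a} := by
  classical
  obtain ⟨s, rfl⟩ := hI
  induction s using Finset.induction with
  | empty => exact ⟨0, by rw [Finset.coe_empty, Ideal.span_empty, Ideal.span_singleton_eq_bot.mpr rfl]⟩
  | @insert x s hx ih =>
    obtain ⟨a, ha⟩ := ih
    rw [Finset.coe_insert, Ideal.span_insert, ha]
    rcases hval (Ideal.span {x}) (Ideal.span {a}) with hle | hle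
    · exact ⟨a, sup_eq_right.mpr hle⟩
    · exact ⟨x, sup_eq_left.mpr hle⟩

/-- In a module `M` over a valuation ring, if `r • y ≠ 0` then
`(0:y) = r·(0:ry)` and, when `(0:y) ≠ 0`, `(0:y)` is finitely generated iff
`(0:ry)` is. Here `(0:y)` is the kernel of `a ↦ a • y`. -/
theorem stmt_3 (R : Type u) [CommRing R] (hval : IdealsTotallyOrdered R)
    (M : Type u) [AddCommGroup M] [Module R M] (r : R) (y : M) (h : r • y ≠ 0) :
    ((LinearMap.ker (LinearMap.toSpanSingleton R M y) : Set R) =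
      (fun b : R => r * b) ''
        (LinearMap.ker (LinearMap.toSpanSingleton R M (r • y)) : Set R)) ∧
    (LinearMap.ker (LinearMap.toSpanSingleton R M y) ≠ ⊥ →
      ((LinearMap.ker (LinearMap.toSpanSingleton R M y)).FG ↔
        (LinearMap.ker (LinearMap.toSpanSingleton R M (r • y))).FG)) := by
  set I := LinearMap.ker (LinearMap.toSpanSingleton R M y) with hIdef
  set J := LinearMap.ker (LinearMap.toSpanSingleton R M (r • y)) with hJdef
  have hImem : ∀ a : R, a ∈ I ↔ a • y = 0 := fun a => Iff.rfl
  have hJmem : ∀ a : R, a ∈ J ↔ a • r • y = 0 := fun a => Iff.rfl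
  have hset : (I : Set R) = (fun b : R => r * b) '' (J : Set R) := by
    ext a
    constructor
    · intro ha
      have ha' : a • y = 0 := ha
      rcases hval (Ideal.span {a}) (Ideal.span {r}) with hle | hle
      · obtain ⟨b, hb⟩ := Ideal.mem_span_singleton'.mp
          (hle (Ideal.mem_span_singleton_self a))
        refine ⟨b, ?_, by simpa [mul_comm] using hb⟩
        show b • r • y = 0
        rw [smul_smul, hb]; exact ha'
      · obtain ⟨c, hc⟩ := Ideal.mem_span_singleton'.mp
          (hle (Ideal.mem_span_singleton_self r))
        exact absurd (by rw [← hc, ← smul_smul, ha', smul_zero]) h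
    · rintro ⟨b, hb, rfl⟩
      have hb' : b • r • y = 0 := hb
      show (r * b) • y = 0
      rw [mul_comm, ← smul_smul]; exact hb'
  refine ⟨hset, fun hne => ?_⟩
  constructor
  · intro hIfg
    obtain ⟨a, ha⟩ := principal_of_fg_aux hval I hIfg
    have haI : a ∈ I := ha ▸ Ideal.mem_span_singleton_self a
    have hane : a ≠ 0 := by
      rintro rfl
      exact hne (by rw [ha, Ideal.span_singleton_eq_bot.mpr rfl])
    obtain ⟨b, hbJ, hrb⟩ := (Set.ext_iff.mp hset a).mp haI
    -- a = r * b, b ∈ J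
    refine ⟨{b}, ?_⟩
    apply le_antisymm
    · rw [Submodule.span_le]
      simpa using hbJ
    · intro c hc
      have hrc : r * c ∈ I := by
        show (r * c) • y = 0
        rw [mul_comm, ← smul_smul]
        exact hc
      rw [ha] at hrc
      obtain ⟨d, hd⟩ := Ideal.mem_span_singleton'.mp hrc
      -- d * a = r * c, a = r * b ⇒ r * (c - b * d) = 0
      have hann : r * (c - b * d) = 0 := by
        rw [mul_sub, ← hd, ← hrb]; ring
      have hK : c - b * d ∈ LinearMap.ker (LinearMap.toSpanSingleton R R r) := by
        show (c - b * d) • r = 0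
        rw [smul_eq_mul, mul_comm]; exact hann
      have hKle : LinearMap.ker (LinearMap.toSpanSingleton R R r) ≤ Ideal.span {b} := by
        rcases hval (LinearMap.ker (LinearMap.toSpanSingleton R R r)) (Ideal.span {b})
          with hle | hle
        · exact hle
        · exfalso
          have : b • r = 0 := hle (Ideal.mem_span_singleton_self b)
          apply hane
          rw [← hrb]
          show r * b = 0
          rw [mul_comm, ← smul_eq_mul]
          exact this
      have hc1 : c - b * d ∈ Ideal.span {b} := hKle hK
      have hc2 : b * d ∈ Ideal.span {b} := Ideal.mem_span_singleton'.mpr ⟨d, mul_comm d b⟩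
      simpa using Ideal.add_mem _ hc1 hc2
  · intro hJfg
    have : I = Submodule.map (r • (LinearMap.id : R →ₗ[R] R)) J := by
      apply Submodule.ext
      intro a
      rw [Submodule.mem_map]
      constructor
      · intro ha
        obtain ⟨b, hb, hrb⟩ := (Set.ext_iff.mp hset a).mp ha
        exact ⟨b, hb, by simpa [smul_eq_mul] using hrb⟩
      · rintro ⟨b, hb, rfl⟩
        exact (Set.ext_iff.mp hset _).mpr ⟨b, hb, by simp [smul_eq_mul]⟩
    rw [this]
    exact Submodule.FG.map _ hJfg
end

section
/- Let R be a commutative local ring, U a uniserial R-module, r ∈ R, and x, y ∈ U such that rx = ry ≠ 0. Then Rx = Ry. -/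
universe u

private lemma stmt4_aux (R : Type u) [CommRing R] [IsLocalRing R]
    (U : Type u) [AddCommGroup U] [Module R U]
    (r : R) (x y : U) (hxy : r • x = r • y) (hne : r • y ≠ 0)
    (hle : Submodule.span R {x} ≤ Submodule.span R {y}) :
    Submodule.span R {x} = Submodule.span R {y} := by
  have hx : x ∈ Submodule.span R ({y} : Set U) :=
    hle (Submodule.mem_span_singleton_self x)
  obtain ⟨s, hs⟩ := Submodule.mem_span_singleton.mp hx
  have key : (r * (1 - s)) • y = 0 := by
    have : r • (s • y) = r • y := by rw [hs, hxy]
    rw [smul_smul, mul_comm r s] at this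
    rw [mul_sub, mul_one, sub_smul, mul_comm r s, this, sub_self]
  rcases IsLocalRing.isUnit_or_isUnit_one_sub_self s with hu | hu
  · refine le_antisymm hle ?_
    rw [Submodule.span_singleton_le_iff_mem, ← hs]
    obtain ⟨u, rfl⟩ := hu
    exact Submodule.mem_span_singleton.mpr ⟨((u⁻¹ : Rˣ) : R), by
      rw [smul_smul, ← Units.val_mul]; simp⟩
  · exfalso
    obtain ⟨u, hu⟩ := hu
    apply hne
    have : ((u⁻¹ : Rˣ) : R) • (r * (1 - s)) • y = 0 := by rw [key, smul_zero]
    rw [smul_smul, ← mul_assoc, mul_comm _ r, mul_assoc, ← hu, ← Units.val_mul] at this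
    simpa using this

/-- In a uniserial module `U` over a commutative local ring, if
`r • x = r • y ≠ 0` then `Rx = Ry`. -/
theorem stmt_4 (R : Type u) [CommRing R] [IsLocalRing R]
    (U : Type u) [AddCommGroup U] [Module R U] (hU : UniserialModule R U)
    (r : R) (x y : U) (hxy : r • x = r • y) (hne : r • y ≠ 0) :
    Submodule.span R {x} = Submodule.span R {y} := by
  rcases hU (Submodule.span R {x}) (Submodule.span R {y}) with h | h
  · exact stmt4_aux R U r x y hxy hne h
  · exact (stmt4_aux R U r y x hxy.symm (hxy ▸ hne) h).symm
end

section
/- Let R be an almost maximal valuation ring with set of zerodivisors Z, let H be an injective hull of R/Z, and let x ∈ H be such that (0:x) = Z. Then for every proper faithful ideal A of R (i.e. A ≠ R and (0:A) = 0), the quotient H/Ax is an injective hull of R/A. -/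
universe u

section Stmt6Aux

variable {R : Type u} [CommRing R]

theorem s6_comp (hval : ∀ I J : Ideal R, I ≤ J ∨ J ≤ I) (r s : R) :
    ∃ c : R, r = c * s ∨ s = c * r := by
  rcases hval (Ideal.span {r}) (Ideal.span {s}) with h | h
  · obtain ⟨c, hc⟩ := Ideal.mem_span_singleton'.1 (h (Ideal.mem_span_singleton_self r))
    exact ⟨c, Or.inl hc.symm⟩
  · obtain ⟨c, hc⟩ := Ideal.mem_span_singleton'.1 (h (Ideal.mem_span_singleton_self s))
    exact ⟨c, Or.inr hc.symm⟩

theorem s6_cosetChain (hval : ∀ I J : Ideal R, I ≤ J ∨ J ≤ I)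
    (a₁ a₂ : R) (L₁ L₂ : Ideal R) (hp : ∃ p : R, p - a₁ ∈ L₁ ∧ p - a₂ ∈ L₂) :
    {y : R | y - a₁ ∈ L₁} ⊆ {y : R | y - a₂ ∈ L₂} ∨
      {y : R | y - a₂ ∈ L₂} ⊆ {y : R | y - a₁ ∈ L₁} := by
  obtain ⟨p, hp₁, hp₂⟩ := hp
  rcases hval L₁ L₂ with hL | hL
  · left
    intro y hy
    have h1 : y - p ∈ L₂ := hL (by simpa using L₁.sub_mem hy hp₁)
    have : (y - p) + (p - a₂) ∈ L₂ := L₂.add_mem h1 hp₂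
    simpa using this
  · right
    intro y hy
    have h1 : y - p ∈ L₁ := hL (by simpa using L₂.sub_mem hy hp₂)
    have : (y - p) + (p - a₁) ∈ L₁ := L₁.add_mem h1 hp₁
    simpa using this


variable {Z : Ideal R} (hZ : ∀ r : R, r ∈ Z ↔ ∃ s : R, s ≠ 0 ∧ r * s = 0)

include hZ

theorem s6_nontrivial : Nontrivial R := by
  obtain ⟨s, hs0, -⟩ := (hZ 0).mp Z.zero_mem
  exact ⟨s, 0, hs0⟩

theorem s6_one_not : (1 : R) ∉ Z := by
  intro h
  obtain ⟨s, hs0, hs⟩ := (hZ 1).mp h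
  exact hs0 (by simpa using hs)

theorem s6_mem_Z {t r : R} (h : t * r = 0) (hr : r ≠ 0) : t ∈ Z :=
  (hZ t).2 ⟨r, hr, h⟩

theorem s6_reg {t s : R} (ht : t ∉ Z) (h : t * s = 0) : s = 0 := by
  by_contra hs
  exact ht ((hZ t).2 ⟨s, hs, h⟩)

theorem s6_Zprime {r s : R} (h : r * s ∈ Z) : r ∈ Z ∨ s ∈ Z := by
  obtain ⟨u, hu0, hu⟩ := (hZ _).mp h
  by_cases hsu : s * u = 0
  · exact Or.inr ((hZ s).2 ⟨u, hu0, hsu⟩)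
  · exact Or.inl ((hZ r).2 ⟨s * u, hsu, by rw [← mul_assoc]; exact hu⟩)

theorem s6_ZleA (hval : ∀ I J : Ideal R, I ≤ J ∨ J ≤ I) {A : Ideal R}
    (hAfaithful : ∀ r : R, (∀ a ∈ A, r * a = 0) → r = 0) : Z ≤ A := by
  intro z hz
  by_contra hzA
  rcases hval A (Ideal.span {z}) with h | h
  · obtain ⟨s, hs0, hs⟩ := (hZ z).mp hz
    refine hs0 (hAfaithful s fun a ha => ?_)
    obtain ⟨c, hc⟩ := Ideal.mem_span_singleton'.1 (h ha)
    rw [← hc, show s * (c * z) = c * (z * s) by ring, hs, mul_zero]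
  · exact hzA (h (Ideal.mem_span_singleton_self z))

end Stmt6Aux

section Stmt6H

variable {R : Type u} [CommRing R] {H : Type u} [AddCommGroup H] [Module R H]
variable {Z : Ideal R} {ιH : (R ⧸ Z) →ₗ[R] H}

theorem s6_reginj (hZ : ∀ r : R, r ∈ Z ↔ ∃ s : R, s ≠ 0 ∧ r * s = 0)
    (hιinj : Function.Injective ιH)
    (hess : ∀ K : Submodule R H, K ≠ ⊥ → K ⊓ LinearMap.range ιH ≠ ⊥)
    {a : R} (ha : a ∉ Z) {v : H} (hv : a • v = 0) : v = 0 := by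
  by_contra hv0
  have hK : Submodule.span R {v} ≠ ⊥ := by
    simpa [Submodule.span_singleton_eq_bot] using hv0
  obtain ⟨y, hy, hy0⟩ := (Submodule.ne_bot_iff _).1 (hess _ hK)
  obtain ⟨ρ, hρ⟩ := Submodule.mem_span_singleton.1 hy.1
  obtain ⟨q, hq⟩ := hy.2
  have hay : a • y = 0 := by
    rw [← hρ, smul_comm, hv, smul_zero]
  have haq : a • q = 0 := by
    apply hιinj
    rw [map_smul, hq, hay, map_zero]
  obtain ⟨m, rfl⟩ := Submodule.Quotient.mk_surjective Z q
  have hm : m ∉ Z := by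
    intro hm
    apply hy0
    rw [← hq, (Submodule.Quotient.mk_eq_zero Z).2 hm, map_zero]
  have ham : a * m ∈ Z := by
    rwa [← Submodule.Quotient.mk_smul, Submodule.Quotient.mk_eq_zero, smul_eq_mul] at haq
  rcases s6_Zprime hZ ham with h | h
  · exact ha h
  · exact hm h

theorem s6_regdiv (hZ : ∀ r : R, r ∈ Z ↔ ∃ s : R, s ≠ 0 ∧ r * s = 0)
    (hinj : Module.Injective R H) {a : R} (ha : a ∉ Z) (h : H) : ∃ w : H, a • w = h := by
  have finj : Function.Injective (LinearMap.toSpanSingleton R R a) := by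
    intro r r' hrr
    simp only [LinearMap.toSpanSingleton_apply, smul_eq_mul] at hrr
    have h0 : a * (r - r') = 0 := by
      have h2 : r * a - r' * a = 0 := sub_eq_zero_of_eq hrr
      calc a * (r - r') = r * a - r' * a := by ring
        _ = 0 := h2
    exact sub_eq_zero.1 (s6_reg hZ ha h0)
  obtain ⟨F, hF⟩ := hinj.out (LinearMap.toSpanSingleton R R a) finj
    (LinearMap.toSpanSingleton R H h)
  have h1 := hF 1
  simp only [LinearMap.toSpanSingleton_apply, one_smul] at h1
  refine ⟨F 1, ?_⟩
  have hFa : F a = a • F 1 := by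
    conv_lhs => rw [show a = a • (1 : R) by simp]
    rw [map_smul]
  rw [← hFa, h1]

end Stmt6H

section Stmt6T

variable {R : Type u} [CommRing R] {H : Type u} [AddCommGroup H] [Module R H]
variable {Z A : Ideal R} {x : H} {ιH : (R ⧸ Z) →ₗ[R] H}

theorem s6_memT {y : H} :
    y ∈ Submodule.map (LinearMap.toSpanSingleton R H x) A ↔ ∃ a ∈ A, a • x = y := by
  simp [Submodule.mem_map, LinearMap.toSpanSingleton_apply]

theorem s6_smulxT (hannx : ∀ r : R, r • x = 0 ↔ r ∈ Z) (hZA : Z ≤ A) {r : R} :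
    r • x ∈ Submodule.map (LinearMap.toSpanSingleton R H x) A ↔ r ∈ A := by
  constructor
  · intro h
    obtain ⟨a, ha, haa⟩ := s6_memT.1 h
    have h0 : (r - a) • x = 0 := by rw [sub_smul, haa, sub_self]
    have hra : r - a ∈ Z := (hannx _).1 h0
    have hre : r = (r - a) + a := by ring
    rw [hre]; exact A.add_mem (hZA hra) ha
  · intro h; exact s6_memT.2 ⟨r, h, rfl⟩

theorem s6_G1 (hval : ∀ I J : Ideal R, I ≤ J ∨ J ≤ I)
    (hZ : ∀ r : R, r ∈ Z ↔ ∃ s : R, s ≠ 0 ∧ r * s = 0)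
    (hιinj : Function.Injective ιH)
    (hess : ∀ K : Submodule R H, K ≠ ⊥ → K ⊓ LinearMap.range ιH ≠ ⊥)
    (hinj : Module.Injective R H)
    (hannx : ∀ r : R, r • x = 0 ↔ r ∈ Z) (hA : A ≠ ⊤) (hZA : Z ≤ A)
    {r : R} (hr : r ≠ 0) (h : H)
    (hyp : ∀ t : R, t * r = 0 → t • h ∈ Submodule.map (LinearMap.toSpanSingleton R H x) A) :
    ∀ t : R, t * r = 0 → t • h = 0 := by
  intro t htr
  by_contra hth
  obtain ⟨a, haA, hax⟩ := s6_memT.1 (hyp t htr)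
  have haZ : a ∉ Z := by
    intro haZ
    exact hth (by rw [← hax]; exact (hannx a).2 haZ)
  obtain ⟨w, hw⟩ := s6_regdiv hZ hinj haZ h
  have htw : t • w = x := by
    have key : a • (t • w - x) = 0 := by
      rw [smul_sub, smul_comm a t, hw, hax, sub_self]
    have := s6_reginj (ιH := ιH) hZ hιinj hess haZ key
    exact sub_eq_zero.1 this
  obtain ⟨c, hc⟩ := s6_comp hval t a
  rcases hc with hc | hc
  · -- t = c * a
    have hcr : c * r = 0 := by
      apply s6_reg hZ haZ
      calc a * (c * r) = (c * a) * r := by ring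
        _ = t * r := by rw [← hc]
        _ = 0 := htr
    obtain ⟨a', ha'A, ha'x⟩ := s6_memT.1 (hyp c hcr)
    have hch : c • h = x := by
      rw [← hw, smul_smul, ← hc, htw]
    have hxx : (1 - a') • x = 0 := by
      rw [sub_smul, one_smul, ha'x, hch, sub_self]
    have h1 : (1 : R) ∈ A := by
      have h1Z : 1 - a' ∈ Z := (hannx _).1 hxx
      have he : (1 : R) = (1 - a') + a' := by ring
      rw [he]; exact A.add_mem (hZA h1Z) ha'A
    exact hA ((Ideal.eq_top_iff_one A).2 h1)
  · -- a = c * t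
    have htZ : t ∈ Z := s6_mem_Z hZ htr hr
    exact haZ (by rw [hc]; exact Z.mul_mem_left c htZ)

end Stmt6T

section Stmt6Baer

variable {R : Type u} [CommRing R] {H : Type u} [AddCommGroup H] [Module R H]

theorem s6_baer
    (hval : ∀ I J : Ideal R, I ≤ J ∨ J ≤ I)
    (ham : ∀ (ι : Type u) (a : ι → R) (L : ι → Ideal R),
      (∀ i j : ι, {y : R | y - a i ∈ L i} ⊆ {y : R | y - a j ∈ L j} ∨
        {y : R | y - a j ∈ L j} ⊆ {y : R | y - a i ∈ L i}) →
      (⨅ i, L i) ≠ ⊥ → (⋂ i, {y : R | y - a i ∈ L i}).Nonempty)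
    {Z : Ideal R} (hZ : ∀ r : R, r ∈ Z ↔ ∃ s : R, s ≠ 0 ∧ r * s = 0)
    {ιH : (R ⧸ Z) →ₗ[R] H}
    (hιinj : Function.Injective ιH)
    (hess : ∀ K : Submodule R H, K ≠ ⊥ → K ⊓ LinearMap.range ιH ≠ ⊥)
    (hinj : Module.Injective R H)
    {x : H} (hannx : ∀ r : R, r • x = 0 ↔ r ∈ Z)
    {A : Ideal R} (hA : A ≠ ⊤)
    (hAfaithful : ∀ r : R, (∀ a ∈ A, r * a = 0) → r = 0) :
    Module.Baer R (H ⧸ Submodule.map (LinearMap.toSpanSingleton R H x) A) := by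
  classical
  have hZA : Z ≤ A := s6_ZleA hZ hval hAfaithful
  set T := Submodule.map (LinearMap.toSpanSingleton R H x) A with hTdef
  have memT : ∀ y : H, y ∈ T ↔ ∃ a ∈ A, a • x = y := fun y => s6_memT
  have mkQ0 : ∀ v : H, T.mkQ v = 0 ↔ v ∈ T := fun v => by
    rw [Submodule.mkQ_apply, Submodule.Quotient.mk_eq_zero]
  have xkill : ∀ κ b : R, κ ∈ Z → (κ * b) • x = 0 :=
    fun κ b hκ => (hannx _).2 (Z.mul_mem_right b hκ)
  intro I φ
  -- lifts of φ
  obtain ⟨hlR, hlR_spec⟩ : ∃ hl : R → H, ∀ (r : R) (hr : r ∈ I), T.mkQ (hl r) = φ ⟨r, hr⟩ := by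
    have h1 : ∀ r : R, ∃ v : H, ∀ hr : r ∈ I, T.mkQ v = φ ⟨r, hr⟩ := by
      intro r
      by_cases hr : r ∈ I
      · obtain ⟨v, hv⟩ := Submodule.mkQ_surjective T (φ ⟨r, hr⟩)
        exact ⟨v, fun hr' => hv⟩
      · exact ⟨0, fun hr' => absurd hr' hr⟩
    choose hl hspec using h1
    exact ⟨hl, fun r hr => hspec r hr⟩
  -- the set of nonzero principal ideals inside I
  set N : Set (Ideal R) := {P | ∃ r : R, r ∈ I ∧ r ≠ 0 ∧ P = Ideal.span {r}} with hNdef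
  obtain ⟨rep, rep_spec⟩ : ∃ rep : Ideal R → R,
      ∀ P, P ∈ N → (rep P ∈ I ∧ rep P ≠ 0 ∧ P = Ideal.span {rep P}) := by
    have h1 : ∀ P : Ideal R, ∃ r : R, P ∈ N → (r ∈ I ∧ r ≠ 0 ∧ P = Ideal.span {r}) := by
      intro P
      by_cases hP : P ∈ N
      · obtain ⟨r, h⟩ := hP
        exact ⟨r, fun _ => h⟩
      · exact ⟨0, fun h => absurd h hP⟩
    choose rep hspec using h1
    exact ⟨rep, hspec⟩
  set hli : Ideal R → H := fun P => hlR (rep P) with hlidef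
  have memPS : ∀ P ∈ N, ∀ S ∈ N, P ≤ S → rep P ∈ Ideal.span {rep S} := by
    intro P hP S hS hPS
    have h1 : rep P ∈ P := by
      have h0 := Ideal.mem_span_singleton_self (rep P)
      rwa [← (rep_spec P hP).2.2] at h0
    have h2 : rep P ∈ Ideal.span {rep S} := by
      rw [← (rep_spec S hS).2.2]; exact hPS h1
    exact h2
  obtain ⟨ew, ew_spec⟩ : ∃ ew : Ideal R → Ideal R → R,
      ∀ P S : Ideal R, rep P ∈ Ideal.span {rep S} → ew P S * rep S = rep P := by
    have h1 : ∀ P S : Ideal R, ∃ e : R, rep P ∈ Ideal.span {rep S} → e * rep S = rep P := by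
      intro P S
      by_cases h : rep P ∈ Ideal.span {rep S}
      · obtain ⟨e, he⟩ := Ideal.mem_span_singleton'.1 h
        exact ⟨e, fun _ => he⟩
      · exact ⟨0, fun h' => absurd h' h⟩
    choose ew hspec using h1
    exact ⟨ew, hspec⟩
  have ewS : ∀ P ∈ N, ∀ S ∈ N, P ≤ S → ew P S * rep S = rep P :=
    fun P hP S hS h => ew_spec P S (memPS P hP S hS h)
  -- φ-linearity facts
  have N4 : ∀ P ∈ N, ∀ t : R, t * rep P = 0 → t • hli P = 0 := by
    intro P hP
    apply s6_G1 hval hZ hιinj hess hinj hannx hA hZA (rep_spec P hP).2.1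
    intro t ht
    rw [← mkQ0, map_smul, hlR_spec _ (rep_spec P hP).1, ← map_smul]
    have he : t • (⟨rep P, (rep_spec P hP).1⟩ : I) = 0 :=
      Subtype.ext (by simpa [smul_eq_mul] using ht)
    rw [he, map_zero]
  have N5 : ∀ P ∈ N, ∀ S ∈ N, P ≤ S → (ew P S) • hli S - hli P ∈ T := by
    intro P hP S hS hPS
    rw [← mkQ0, map_sub, map_smul, hlR_spec _ (rep_spec S hS).1,
      hlR_spec _ (rep_spec P hP).1, ← map_smul]
    have he : (ew P S) • (⟨rep S, (rep_spec S hS).1⟩ : I) = ⟨rep P, (rep_spec P hP).1⟩ :=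
      Subtype.ext (by simpa [smul_eq_mul] using ewS P hP S hS hPS)
    rw [he, sub_self]
  -- witnesses for N5
  obtain ⟨c2, c2_spec⟩ : ∃ c2 : Ideal R → Ideal R → R,
      ∀ P S : Ideal R, (ew P S) • hli S - hli P ∈ T →
        (c2 P S ∈ A ∧ (c2 P S) • x = (ew P S) • hli S - hli P) := by
    have h1 : ∀ P S : Ideal R, ∃ c : R, (ew P S) • hli S - hli P ∈ T →
        (c ∈ A ∧ c • x = (ew P S) • hli S - hli P) := by
      intro P S
      by_cases h : (ew P S) • hli S - hli P ∈ T
      · obtain ⟨c, hc, hcx⟩ := (memT _).1 h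
        exact ⟨c, fun _ => ⟨hc, hcx⟩⟩
      · exact ⟨0, fun h' => absurd h' h⟩
    choose c2 hspec using h1
    exact ⟨c2, hspec⟩
  have c2S : ∀ P ∈ N, ∀ S ∈ N, P ≤ S →
      (c2 P S ∈ A ∧ (c2 P S) • x = (ew P S) • hli S - hli P) :=
    fun P hP S hS h => c2_spec P S (N5 P hP S hS h)
  -- kill lemma
  have kill : ∀ S ∈ N, ∀ κ : R, κ * rep S = 0 → ∀ b : R, κ • (hli S + b • x) = 0 := by
    intro S hS κ hκ b
    rw [smul_add, N4 S hS κ hκ, smul_smul, zero_add]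
    exact xkill κ b (s6_mem_Z hZ hκ (rep_spec S hS).2.1)
  have ecoc : ∀ P ∈ N, ∀ S ∈ N, ∀ S' ∈ N, P ≤ S → S ≤ S' → ∀ b : R,
      (ew P S') • (hli S' + b • x) = (ew P S * ew S S') • (hli S' + b • x) := by
    intro P hP S hS S' hS' hPS hSS' b
    have hκ : (ew P S' - ew P S * ew S S') * rep S' = 0 := by
      rw [sub_mul, mul_assoc, ewS S hS S' hS' hSS', ewS P hP S hS hPS,
        ewS P hP S' hS' (le_trans hPS hSS'), sub_self]
    have h0 := kill S' hS' _ hκ b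
    rw [sub_smul] at h0
    exact sub_eq_zero.1 h0
  -- the partial coherent families
  let Good : Set (Ideal R × H) → Prop := fun G =>
    (∀ p ∈ G, p.1 ∈ N) ∧
    (∀ p ∈ G, ∀ q ∈ G, p.1 = q.1 → p.2 = q.2) ∧
    (∀ p ∈ G, ∀ P' ∈ N, P' ≤ p.1 → ∃ v' : H, (P', v') ∈ G) ∧
    (∀ p ∈ G, ∀ S ∈ N, p.1 ≤ S → ∃ b ∈ A, p.2 = (ew p.1 S) • (hli S + b • x)) ∧
    (∀ p ∈ G, ∀ q ∈ G, p.1 ≤ q.1 → p.2 = (ew p.1 q.1) • q.2)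
  obtain ⟨G, hGmax⟩ : ∃ G, Maximal (· ∈ {G | Good G}) G := by
    apply zorn_subset
    intro c hc hchain
    rcases Set.eq_empty_or_nonempty c with rfl | hne
    · refine ⟨∅, ⟨?_, ?_, ?_, ?_, ?_⟩, by simp⟩ <;> simp
    · refine ⟨⋃₀ c, ?_, fun s hs => Set.subset_sUnion_of_mem hs⟩
      have pair : ∀ p ∈ ⋃₀ c, ∀ q ∈ ⋃₀ c, ∃ G₀ ∈ c, p ∈ G₀ ∧ q ∈ G₀ := by
        rintro p ⟨G₁, hG₁, hpG₁⟩ q ⟨G₂, hG₂, hqG₂⟩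
        rcases hchain.total hG₁ hG₂ with h | h
        · exact ⟨G₂, hG₂, h hpG₁, hqG₂⟩
        · exact ⟨G₁, hG₁, hpG₁, h hqG₂⟩
      refine ⟨?_, ?_, ?_, ?_, ?_⟩
      · rintro p ⟨G₁, hG₁, hpG₁⟩
        exact (hc hG₁).1 p hpG₁
      · intro p hp q hq h
        obtain ⟨G₀, hG₀, hp₀, hq₀⟩ := pair p hp q hq
        exact (hc hG₀).2.1 p hp₀ q hq₀ h
      · rintro p ⟨G₁, hG₁, hpG₁⟩ P' hP' hle
        obtain ⟨v', hv'⟩ := (hc hG₁).2.2.1 p hpG₁ P' hP' hle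
        exact ⟨v', G₁, hG₁, hv'⟩
      · rintro p ⟨G₁, hG₁, hpG₁⟩ S hS hle
        exact (hc hG₁).2.2.2.1 p hpG₁ S hS hle
      · intro p hp q hq h
        obtain ⟨G₀, hG₀, hp₀, hq₀⟩ := pair p hp q hq
        exact (hc hG₀).2.2.2.2 p hp₀ q hq₀ h
  have hG : Good G := hGmax.prop
  have hfull : ∀ Q ∈ N, ∃ v : H, (Q, v) ∈ G := by
    by_contra hcon
    push_neg at hcon
    obtain ⟨Q, hQN, hQv⟩ := hcon
    have hdom : ∀ p ∈ G, p.1 ≤ Q := by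
      intro p hp
      rcases hval p.1 Q with h | h
      · exact h
      · obtain ⟨v', hv'⟩ := hG.2.2.1 p hp Q hQN h
        exact absurd hv' (hQv v')
    obtain ⟨bsel, bsel_spec⟩ : ∃ bs : Ideal R × H → R, ∀ p ∈ G,
        bs p ∈ A ∧ p.2 = (ew p.1 Q) • (hli Q + bs p • x) := by
      have h1 : ∀ p : Ideal R × H, ∃ b : R, p ∈ G →
          (b ∈ A ∧ p.2 = (ew p.1 Q) • (hli Q + b • x)) := by
        intro p
        by_cases hp : p ∈ G
        · obtain ⟨b, hb, hbe⟩ := hG.2.2.2.1 p hp Q hQN (hdom p hp)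
          exact ⟨b, fun _ => ⟨hb, hbe⟩⟩
        · exact ⟨0, fun h => absurd h hp⟩
      choose bs hspec using h1
      exact ⟨bs, hspec⟩
    have cancelx : ∀ e b b' : R, (e • (hli Q + b • x) = e • (hli Q + b' • x)) →
        e * (b - b') ∈ Z := by
      intro e b b' hE
      rw [smul_add, smul_add] at hE
      have h5 := sub_eq_zero_of_eq (add_left_cancel hE)
      rw [smul_smul, smul_smul, ← sub_smul, ← mul_sub] at h5
      exact (hannx _).1 h5
    have fact_i : ∀ p ∈ G, ∀ p' ∈ G, p.1 ≤ p'.1 →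
        (ew p.1 Q) * (bsel p - bsel p') ∈ Z := by
      intro p hp p' hp' hle
      have h1 : p.2 = (ew p.1 Q) • (hli Q + bsel p • x) := (bsel_spec p hp).2
      have h3 : p.2 = (ew p.1 Q) • (hli Q + bsel p' • x) := by
        rw [hG.2.2.2.2 p hp p' hp' hle, (bsel_spec p' hp').2, smul_smul,
          ← ecoc p.1 (hG.1 p hp) p'.1 (hG.1 p' hp') Q hQN hle (hdom p' hp')]
      exact cancelx _ _ _ (h1.symm.trans h3)
    have hc2eq : ∀ S ∈ N, Q ≤ S → (ew Q S) • hli S = hli Q + (c2 Q S) • x := by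
      intro S hS hQS
      rw [(c2S Q hQN S hS hQS).2]
      abel
    have fact_ii : ∀ p ∈ G, ∀ S ∈ N, Q ≤ S → ∃ B ∈ A,
        (ew p.1 Q) * (bsel p - (c2 Q S + ew Q S * B)) ∈ Z := by
      intro p hp S hS hQS
      have hpS : p.1 ≤ S := le_trans (hdom p hp) hQS
      obtain ⟨B, hB, hBe⟩ := hG.2.2.2.1 p hp S hS hpS
      refine ⟨B, hB, ?_⟩
      have h1 : p.2 = (ew p.1 Q) • (hli Q + (c2 Q S + ew Q S * B) • x) := by
        rw [hBe, ecoc p.1 (hG.1 p hp) Q hQN S hS (hdom p hp) hQS B, ← smul_smul]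
        congr 1
        calc (ew Q S) • (hli S + B • x)
            = (ew Q S) • hli S + (ew Q S * B) • x := by rw [smul_add, smul_smul]
          _ = hli Q + (c2 Q S + ew Q S * B) • x := by rw [hc2eq S hS hQS, add_smul]; abel
      exact cancelx _ _ _ ((bsel_spec p hp).2.symm.trans h1)
    have fact_iii : ∀ S ∈ N, ∀ S' ∈ N, Q ≤ S → S ≤ S' →
        c2 Q S' - c2 Q S - ew Q S * c2 S S' ∈ Z := by
      intro S hS S' hS' hQS hSS'
      have key : (c2 Q S' - c2 Q S - ew Q S * c2 S S') • x = 0 := by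
        have e1 : (c2 Q S') • x = (ew Q S') • hli S' - hli Q :=
          (c2S Q hQN S' hS' (le_trans hQS hSS')).2
        have e2 : (c2 Q S) • x = (ew Q S) • hli S - hli Q := (c2S Q hQN S hS hQS).2
        have e3 : (c2 S S') • x = (ew S S') • hli S' - hli S := (c2S S hS S' hS' hSS').2
        have e4 : (ew Q S') • hli S' = (ew Q S * ew S S') • hli S' := by
          have h0 := ecoc Q hQN S hS S' hS' hQS hSS' 0
          simpa using h0
        rw [sub_smul, sub_smul, e1, e2,
          show (ew Q S * c2 S S') • x = (ew Q S) • ((c2 S S') • x) by rw [smul_smul], e3, e4,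
          smul_sub, smul_smul]
        abel
      exact (hannx _).1 key
    have domcancel : Z = ⊥ → ∀ u v : R, u * v = 0 → u ≠ 0 → v = 0 := by
      intro hZb u v huv hu
      by_contra hv
      have hm : u ∈ Z := s6_mem_Z hZ huv hv
      rw [hZb] at hm
      exact hu hm
    have ewne : ∀ P ∈ N, ∀ S ∈ N, P ≤ S → ew P S ≠ 0 := by
      intro P hP S hS hle he
      apply (rep_spec P hP).2.1
      rw [← ewS P hP S hS hle, he, zero_mul]
    have memK : ∀ e y : R, (y ∈ Submodule.comap (LinearMap.toSpanSingleton R R e) Z ↔ e * y ∈ Z) := by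
      intro e y
      rw [Submodule.mem_comap, LinearMap.toSpanSingleton_apply, smul_eq_mul, mul_comm]
    have memW : ∀ e y : R, (y ∈ Ideal.span {e} * A ⊔ Z ↔ ∃ b ∈ A, ∃ z ∈ Z, y = e * b + z) := by
      intro e y
      rw [Submodule.mem_sup]
      constructor
      · rintro ⟨u, hu, z, hz, huz⟩
        obtain ⟨b, hb, hbe⟩ := Ideal.mem_span_singleton_mul.1 hu
        exact ⟨b, hb, z, hz, by rw [← huz, ← hbe]⟩
      · rintro ⟨b, hb, z, hz, he⟩
        exact ⟨e * b, Ideal.mem_span_singleton_mul.2 ⟨b, hb, rfl⟩, z, hz, he.symm⟩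
    have tEx : ∃ t : R, t ∈ A ∧ (∀ p ∈ G, (ew p.1 Q) * (t - bsel p) ∈ Z) ∧
        (∀ S ∈ N, Q ≤ S → ∃ b ∈ A, ∃ z ∈ Z, t = c2 Q S + ew Q S * b + z) := by
      by_cases hZbot : Z = ⊥
      · by_cases hGne : ∃ p : Ideal R × H, p ∈ G
        · obtain ⟨p₀, hp₀⟩ := hGne
          have hep₀ : ew p₀.1 Q ≠ 0 := ewne p₀.1 (hG.1 p₀ hp₀) Q hQN (hdom p₀ hp₀)
          refine ⟨bsel p₀, (bsel_spec p₀ hp₀).1, ?_, ?_⟩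
          · intro p hp
            rcases hval p.1 p₀.1 with hle | hle
            · have h := Z.neg_mem (fact_i p hp p₀ hp₀ hle)
              rwa [show -(ew p.1 Q * (bsel p - bsel p₀)) =
                ew p.1 Q * (bsel p₀ - bsel p) by ring] at h
            · have h1' : ew p₀.1 Q * (bsel p₀ - bsel p) = 0 := by
                have h1 := fact_i p₀ hp₀ p hp hle
                rwa [hZbot, Submodule.mem_bot] at h1
              have hκ : (ew p₀.1 Q - ew p₀.1 p.1 * ew p.1 Q) * rep Q = 0 := by
                rw [sub_mul, mul_assoc, ewS p.1 (hG.1 p hp) Q hQN (hdom p hp),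
                  ewS p₀.1 (hG.1 p₀ hp₀) p.1 (hG.1 p hp) hle,
                  ewS p₀.1 (hG.1 p₀ hp₀) Q hQN (hdom p₀ hp₀), sub_self]
              have hκ0 : ew p₀.1 Q - ew p₀.1 p.1 * ew p.1 Q = 0 :=
                domcancel hZbot _ _ (by rw [mul_comm]; exact hκ) (rep_spec Q hQN).2.1
              have heq : ew p₀.1 Q = ew p₀.1 p.1 * ew p.1 Q := sub_eq_zero.1 hκ0
              have h2 : ew p₀.1 p.1 * (ew p.1 Q * (bsel p₀ - bsel p)) = 0 := by
                rw [← mul_assoc, ← heq]; exact h1'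
              have hend : ew p.1 Q * (bsel p₀ - bsel p) = 0 :=
                domcancel hZbot _ _ h2 (ewne p₀.1 (hG.1 p₀ hp₀) p.1 (hG.1 p hp) hle)
              rw [hZbot, Submodule.mem_bot]
              exact hend
          · intro S hS hQS
            obtain ⟨B, hB, hBZ⟩ := fact_ii p₀ hp₀ S hS hQS
            rw [hZbot, Submodule.mem_bot] at hBZ
            have h1 : bsel p₀ - (c2 Q S + ew Q S * B) = 0 := domcancel hZbot _ _ hBZ hep₀
            exact ⟨B, hB, 0, Z.zero_mem, by linear_combination h1⟩
        · -- G empty, Z = ⊥ : almost maximality on the witness cosets and A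
          set ι := ({S : Ideal R // S ∈ N ∧ Q ≤ S} ⊕ PUnit : Type u) with hι
          let ctr : ι → R := fun i => match i with
            | Sum.inl S => c2 Q S.1
            | Sum.inr _ => 0
          let LL : ι → Ideal R := fun i => match i with
            | Sum.inl S => Ideal.span {ew Q S.1} * A ⊔ Z
            | Sum.inr _ => A
          have cSS : ∀ S S' : {S : Ideal R // S ∈ N ∧ Q ≤ S}, S.1 ≤ S'.1 →
              ∃ pt : R, pt - c2 Q S.1 ∈ Ideal.span {ew Q S.1} * A ⊔ Z ∧
                pt - c2 Q S'.1 ∈ Ideal.span {ew Q S'.1} * A ⊔ Z := by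
            intro S S' hle
            refine ⟨c2 Q S'.1, ?_, by rw [sub_self]; exact Submodule.zero_mem _⟩
            have h := fact_iii S.1 S.2.1 S'.1 S'.2.1 S.2.2 hle
            exact (memW _ _).2 ⟨c2 S.1 S'.1, (c2S S.1 S.2.1 S'.1 S'.2.1 hle).1, _, h, by ring⟩
          have chain : ∀ i j : ι, {y : R | y - ctr i ∈ LL i} ⊆ {y : R | y - ctr j ∈ LL j} ∨
              {y : R | y - ctr j ∈ LL j} ⊆ {y : R | y - ctr i ∈ LL i} := by
            intro i j
            apply s6_cosetChain hval
            rcases i with S | u <;> rcases j with S' | u'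
            · rcases hval S.1 S'.1 with hle | hle
              · obtain ⟨pt, h1, h2⟩ := cSS S S' hle
                exact ⟨pt, h1, h2⟩
              · obtain ⟨pt, h1, h2⟩ := cSS S' S hle
                exact ⟨pt, h2, h1⟩
            · refine ⟨c2 Q S.1, by rw [sub_self]; exact Submodule.zero_mem _, ?_⟩
              show c2 Q S.1 - (0:R) ∈ A
              simpa using (c2S Q hQN S.1 S.2.1 S.2.2).1
            · refine ⟨c2 Q S'.1, ?_, by rw [sub_self]; exact Submodule.zero_mem _⟩
              show c2 Q S'.1 - (0:R) ∈ A
              simpa using (c2S Q hQN S'.1 S'.2.1 S'.2.2).1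
            · exact ⟨0, by rw [sub_self]; exact Submodule.zero_mem _,
                by rw [sub_self]; exact Submodule.zero_mem _⟩
          have hlow : Ideal.span {rep Q} * A ≤ ⨅ i, LL i := by
            apply le_iInf
            intro i
            rcases i with S | u
            · refine le_trans ?_ le_sup_left
              apply Ideal.mul_mono_left
              rw [Ideal.span_le, Set.singleton_subset_iff]
              exact Ideal.mem_span_singleton'.2 ⟨rep S.1,
                by rw [mul_comm]; exact ewS Q hQN S.1 S.2.1 S.2.2⟩
            · show Ideal.span {rep Q} * A ≤ A
              rw [mul_comm]; exact Ideal.mul_le_left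
          have hne : Ideal.span {rep Q} * A ≠ ⊥ := by
            have hrQ : rep Q ≠ 0 := (rep_spec Q hQN).2.1
            have : ∃ a ∈ A, rep Q * a ≠ 0 := by
              by_contra hall
              push_neg at hall
              exact hrQ (hAfaithful _ hall)
            obtain ⟨a, ha, hne0⟩ := this
            intro hbot
            apply hne0
            have : rep Q * a ∈ Ideal.span {rep Q} * A :=
              Ideal.mul_mem_mul (Ideal.mem_span_singleton_self _) ha
            rw [hbot, Submodule.mem_bot] at this
            exact this
          have hinf : (⨅ i, LL i) ≠ ⊥ := fun hbot => hne (eq_bot_iff.2 (hbot ▸ hlow))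
          obtain ⟨t, ht⟩ := ham ι ctr LL chain hinf
          simp only [Set.mem_iInter, Set.mem_setOf_eq] at ht
          refine ⟨t, ?_, ?_, ?_⟩
          · have h : t - (0:R) ∈ A := ht (Sum.inr PUnit.unit)
            simpa using h
          · intro p hp
            exact absurd ⟨p, hp⟩ hGne
          · intro S hS hQS
            have h := ht (Sum.inl ⟨S, hS, hQS⟩)
            obtain ⟨b, hb, z, hz, he⟩ := (memW _ _).1 h
            exact ⟨b, hb, z, hz, by linear_combination he⟩
      · -- Z ≠ ⊥ : almost maximality on all three families of cosets
        set ι := ({p : Ideal R × H // p ∈ G} ⊕ ({S : Ideal R // S ∈ N ∧ Q ≤ S} ⊕ PUnit) : Type u)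
          with hι
        let ctr : ι → R := fun i => match i with
          | Sum.inl p => bsel p.1
          | Sum.inr (Sum.inl S) => c2 Q S.1
          | Sum.inr (Sum.inr _) => 0
        let LL : ι → Ideal R := fun i => match i with
          | Sum.inl p => Submodule.comap (LinearMap.toSpanSingleton R R (ew p.1.1 Q)) Z
          | Sum.inr (Sum.inl S) => Ideal.span {ew Q S.1} * A ⊔ Z
          | Sum.inr (Sum.inr _) => A
        have cPP : ∀ p p' : {p : Ideal R × H // p ∈ G}, p.1.1 ≤ p'.1.1 →
            ∃ pt : R, ew p.1.1 Q * (pt - bsel p.1) ∈ Z ∧ ew p'.1.1 Q * (pt - bsel p'.1) ∈ Z := by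
          intro p p' hle
          refine ⟨bsel p'.1, ?_, by rw [sub_self, mul_zero]; exact Z.zero_mem⟩
          have h := Z.neg_mem (fact_i p.1 p.2 p'.1 p'.2 hle)
          rwa [show -(ew p.1.1 Q * (bsel p.1 - bsel p'.1)) =
            ew p.1.1 Q * (bsel p'.1 - bsel p.1) by ring] at h
        have cPS : ∀ (p : {p : Ideal R × H // p ∈ G}) (S : {S : Ideal R // S ∈ N ∧ Q ≤ S}),
            ∃ pt : R, ew p.1.1 Q * (pt - bsel p.1) ∈ Z ∧
              pt - c2 Q S.1 ∈ Ideal.span {ew Q S.1} * A ⊔ Z := by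
          intro p S
          obtain ⟨B, hB, hBZ⟩ := fact_ii p.1 p.2 S.1 S.2.1 S.2.2
          refine ⟨c2 Q S.1 + ew Q S.1 * B, ?_, ?_⟩
          · have h := Z.neg_mem hBZ
            rwa [show -(ew p.1.1 Q * (bsel p.1 - (c2 Q S.1 + ew Q S.1 * B))) =
              ew p.1.1 Q * (c2 Q S.1 + ew Q S.1 * B - bsel p.1) by ring] at h
          · exact (memW _ _).2 ⟨B, hB, 0, Z.zero_mem, by ring⟩
        have cSS : ∀ S S' : {S : Ideal R // S ∈ N ∧ Q ≤ S}, S.1 ≤ S'.1 →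
            ∃ pt : R, pt - c2 Q S.1 ∈ Ideal.span {ew Q S.1} * A ⊔ Z ∧
              pt - c2 Q S'.1 ∈ Ideal.span {ew Q S'.1} * A ⊔ Z := by
          intro S S' hle
          refine ⟨c2 Q S'.1, ?_, by rw [sub_self]; exact Submodule.zero_mem _⟩
          have h := fact_iii S.1 S.2.1 S'.1 S'.2.1 S.2.2 hle
          exact (memW _ _).2 ⟨c2 S.1 S'.1, (c2S S.1 S.2.1 S'.1 S'.2.1 hle).1, _, h, by ring⟩
        have chain : ∀ i j : ι, {y : R | y - ctr i ∈ LL i} ⊆ {y : R | y - ctr j ∈ LL j} ∨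
            {y : R | y - ctr j ∈ LL j} ⊆ {y : R | y - ctr i ∈ LL i} := by
          intro i j
          apply s6_cosetChain hval
          rcases i with p | S | u <;> rcases j with p' | S' | u'
          · rcases hval p.1.1 p'.1.1 with hle | hle
            · obtain ⟨pt, h1, h2⟩ := cPP p p' hle
              exact ⟨pt, (memK _ _).2 h1, (memK _ _).2 h2⟩
            · obtain ⟨pt, h1, h2⟩ := cPP p' p hle
              exact ⟨pt, (memK _ _).2 h2, (memK _ _).2 h1⟩
          · obtain ⟨pt, h1, h2⟩ := cPS p S'
            exact ⟨pt, (memK _ _).2 h1, h2⟩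
          · refine ⟨bsel p.1, (memK _ _).2 ?_, ?_⟩
            · rw [sub_self, mul_zero]; exact Z.zero_mem
            · show bsel p.1 - (0:R) ∈ A
              simpa using (bsel_spec p.1 p.2).1
          · obtain ⟨pt, h1, h2⟩ := cPS p' S
            exact ⟨pt, h2, (memK _ _).2 h1⟩
          · rcases hval S.1 S'.1 with hle | hle
            · obtain ⟨pt, h1, h2⟩ := cSS S S' hle
              exact ⟨pt, h1, h2⟩
            · obtain ⟨pt, h1, h2⟩ := cSS S' S hle
              exact ⟨pt, h2, h1⟩
          · refine ⟨c2 Q S.1, by rw [sub_self]; exact Submodule.zero_mem _, ?_⟩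
            show c2 Q S.1 - (0:R) ∈ A
            simpa using (c2S Q hQN S.1 S.2.1 S.2.2).1
          · refine ⟨bsel p'.1, ?_, (memK _ _).2 ?_⟩
            · show bsel p'.1 - (0:R) ∈ A
              simpa using (bsel_spec p'.1 p'.2).1
            · rw [sub_self, mul_zero]; exact Z.zero_mem
          · refine ⟨c2 Q S'.1, ?_, by rw [sub_self]; exact Submodule.zero_mem _⟩
            show c2 Q S'.1 - (0:R) ∈ A
            simpa using (c2S Q hQN S'.1 S'.2.1 S'.2.2).1
          · exact ⟨0, by rw [sub_self]; exact Submodule.zero_mem _,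
              by rw [sub_self]; exact Submodule.zero_mem _⟩
        have hinf : (⨅ i, LL i) ≠ ⊥ := by
          intro hbot
          apply hZbot
          rw [eq_bot_iff]
          refine le_trans (le_iInf ?_) (le_of_eq hbot)
          intro i
          rcases i with p | S | u
          · intro z hz
            exact (memK _ _).2 (Z.mul_mem_left _ hz)
          · exact le_sup_right
          · exact hZA
        obtain ⟨t, ht⟩ := ham ι ctr LL chain hinf
        simp only [Set.mem_iInter, Set.mem_setOf_eq] at ht
        refine ⟨t, ?_, ?_, ?_⟩
        · have h : t - (0:R) ∈ A := ht (Sum.inr (Sum.inr PUnit.unit))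
          simpa using h
        · intro p hp
          have h := ht (Sum.inl ⟨p, hp⟩)
          exact (memK _ _).1 h
        · intro S hS hQS
          have h := ht (Sum.inr (Sum.inl ⟨S, hS, hQS⟩))
          obtain ⟨b, hb, z, hz, he⟩ := (memW _ _).1 h
          exact ⟨b, hb, z, hz, by linear_combination he⟩
    obtain ⟨t, htA, htb, htc⟩ := tEx
    set vQ : H := hli Q + t • x with hvQ
    have HF2 : ∀ P ∈ N, ∀ S ∈ N, P ≤ S → S ≤ Q →
        (ew P Q) • vQ = (ew P S) • ((ew S Q) • vQ) := by
      intro P hP S hS hPS hSQ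
      rw [smul_smul, hvQ]
      exact ecoc P hP S hS Q hQN hPS hSQ t
    have HF3 : ∀ S ∈ N, Q ≤ S → ∃ b ∈ A, vQ = (ew Q S) • (hli S + b • x) := by
      intro S hS hQS
      obtain ⟨b, hb, z, hz, he⟩ := htc S hS hQS
      refine ⟨b, hb, ?_⟩
      rw [hvQ, he]
      calc hli Q + (c2 Q S + ew Q S * b + z) • x
          = hli Q + (c2 Q S) • x + (ew Q S * b) • x + z • x := by
            rw [add_smul, add_smul]; abel
        _ = (ew Q S) • hli S + (ew Q S * b) • x := by
            rw [(hannx z).2 hz, hc2eq S hS hQS]; abel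
        _ = (ew Q S) • (hli S + b • x) := by rw [smul_add, smul_smul]
    have HF4 : ∀ S ∈ N, S ≤ Q → ∃ b ∈ A, (ew S Q) • vQ = hli S + b • x := by
      intro S hS hSQ
      refine ⟨c2 S Q + ew S Q * t, A.add_mem (c2S S hS Q hQN hSQ).1 (A.mul_mem_left _ htA), ?_⟩
      rw [hvQ, smul_add, smul_smul]
      have h1 : (ew S Q) • hli Q = hli S + (c2 S Q) • x := by
        rw [(c2S S hS Q hQN hSQ).2]; abel
      rw [h1, add_smul]
      abel
    set G' : Set (Ideal R × H) := G ∪ {q | q.1 ∈ N ∧ q.1 ≤ Q ∧ (∀ v : H, (q.1, v) ∉ G) ∧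
        q.2 = (ew q.1 Q) • vQ} with hG'
    have hGsub : G ⊆ G' := Set.subset_union_left
    have hG'good : Good G' := by
      refine ⟨?_, ?_, ?_, ?_, ?_⟩
      · rintro p (hp | hp)
        · exact hG.1 p hp
        · exact hp.1
      · rintro p (hp | hp) q (hq | hq) hpq
        · exact hG.2.1 p hp q hq hpq
        · exfalso
          have hp2 : (p.1, p.2) ∈ G := by simpa using hp
          rw [hpq] at hp2
          exact hq.2.2.1 p.2 hp2
        · exfalso
          have hq2 : (q.1, q.2) ∈ G := by simpa using hq
          rw [← hpq] at hq2
          exact hp.2.2.1 q.2 hq2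
        · rw [hp.2.2.2, hq.2.2.2, hpq]
      · rintro p (hp | hp) P' hP' hle
        · obtain ⟨v', hv'⟩ := hG.2.2.1 p hp P' hP' hle
          exact ⟨v', Or.inl hv'⟩
        · by_cases hPG : ∃ v : H, (P', v) ∈ G
          · obtain ⟨v', hv'⟩ := hPG
            exact ⟨v', Or.inl hv'⟩
          · push_neg at hPG
            exact ⟨(ew P' Q) • vQ, Or.inr ⟨hP', le_trans hle hp.2.1, fun v => hPG v, rfl⟩⟩
      · rintro p (hp | hp) S hS hle
        · exact hG.2.2.2.1 p hp S hS hle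
        · rcases hval S Q with hSQ | hQS
          · obtain ⟨b, hb, hbe⟩ := HF4 S hS hSQ
            refine ⟨b, hb, ?_⟩
            rw [hp.2.2.2, HF2 p.1 hp.1 S hS hle hSQ, hbe]
          · obtain ⟨b, hb, hbe⟩ := HF3 S hS hQS
            refine ⟨b, hb, ?_⟩
            rw [hp.2.2.2, hbe, smul_smul]
            exact (ecoc p.1 hp.1 Q hQN S hS hp.2.1 hQS b).symm
      · rintro p (hp | hp) q (hq | hq) hle
        · exact hG.2.2.2.2 p hp q hq hle
        · rw [hq.2.2.2, ← HF2 p.1 (hG.1 p hp) q.1 hq.1 hle hq.2.1]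
          have h1 : p.2 = (ew p.1 Q) • (hli Q + bsel p • x) := (bsel_spec p hp).2
          rw [h1, hvQ]
          have h2 : (ew p.1 Q * (t - bsel p)) • x = 0 := (hannx _).2 (htb p hp)
          rw [smul_add, smul_add, smul_smul, smul_smul]
          congr 1
          rw [show ew p.1 Q * t = ew p.1 Q * bsel p + ew p.1 Q * (t - bsel p) by ring,
            add_smul, h2, add_zero]
        · exfalso
          obtain ⟨v', hv'⟩ := hG.2.2.1 q hq p.1 hp.1 hle
          exact hp.2.2.1 v' hv'
        · rw [hp.2.2.2, hq.2.2.2, ← HF2 p.1 hp.1 q.1 hq.1 hle hq.2.1]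
    have hsub' : G' ⊆ G := hGmax.2 hG'good hGsub
    have hmem : ((Q, (ew Q Q) • vQ) : Ideal R × H) ∈ G' :=
      Or.inr ⟨hQN, le_refl Q, hQv, rfl⟩
    exact hQv _ (hsub' hmem)
  -- the coherent family of values on all of N
  obtain ⟨vsel, vsel_spec⟩ : ∃ vs : Ideal R → H, ∀ P ∈ N, (P, vs P) ∈ G := by
    have h1 : ∀ P : Ideal R, ∃ v : H, P ∈ N → (P, v) ∈ G := by
      intro P
      by_cases hP : P ∈ N
      · obtain ⟨v, hv⟩ := hfull P hP
        exact ⟨v, fun _ => hv⟩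
      · exact ⟨0, fun h => absurd h hP⟩
    choose vs hspec using h1
    exact ⟨vs, hspec⟩
  have vcoh : ∀ P ∈ N, ∀ S ∈ N, P ≤ S → vsel P = (ew P S) • vsel S := by
    intro P hP S hS hle
    exact hG.2.2.2.2 (P, vsel P) (vsel_spec P hP) (S, vsel S) (vsel_spec S hS) hle
  have vlift : ∀ P ∈ N, ∃ b ∈ A, vsel P = hli P + b • x := by
    intro P hP
    obtain ⟨b, hb, hbe⟩ := hG.2.2.2.1 (P, vsel P) (vsel_spec P hP) P hP (le_refl P)
    refine ⟨b, hb, ?_⟩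
    have hκ : (ew P P - 1) * rep P = 0 := by
      rw [sub_mul, one_mul, ewS P hP P hP (le_refl P), sub_self]
    have h0 := kill P hP _ hκ b
    rw [sub_smul, one_smul] at h0
    have h1 : (ew P P) • (hli P + b • x) = hli P + b • x := sub_eq_zero.1 h0
    exact hbe.trans h1
  have vann : ∀ P ∈ N, ∀ κ : R, κ * rep P = 0 → κ • vsel P = 0 := by
    intro P hP κ hκ
    obtain ⟨b, hb, hbe⟩ := vlift P hP
    rw [hbe]
    exact kill P hP κ hκ b
  have vπ : ∀ (P : Ideal R) (hP : P ∈ N), T.mkQ (vsel P) = φ ⟨rep P, (rep_spec P hP).1⟩ := by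
    intro P hP
    obtain ⟨b, hb, hbe⟩ := vlift P hP
    rw [hbe, map_add, hlR_spec _ (rep_spec P hP).1, (mkQ0 _).2 ((memT _).2 ⟨b, hb, rfl⟩),
      add_zero]
  obtain ⟨aw, aw_spec⟩ : ∃ aw : R → R, ∀ r : R, r ∈ I → r ≠ 0 →
      aw r * rep (Ideal.span {r}) = r := by
    have h1 : ∀ r : R, ∃ α : R, (r ∈ I → r ≠ 0 → α * rep (Ideal.span {r}) = r) := by
      intro r
      by_cases hr : r ∈ I ∧ r ≠ 0
      · have hN : Ideal.span {r} ∈ N := ⟨r, hr.1, hr.2, rfl⟩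
        have hmem : r ∈ Ideal.span {rep (Ideal.span {r})} := by
          rw [← (rep_spec _ hN).2.2]
          exact Ideal.mem_span_singleton_self r
        obtain ⟨α, hα⟩ := Ideal.mem_span_singleton'.1 hmem
        exact ⟨α, fun _ _ => hα⟩
      · exact ⟨0, fun h1 h2 => absurd ⟨h1, h2⟩ hr⟩
    choose aw hspec using h1
    exact ⟨aw, fun r h1 h2 => hspec r h1 h2⟩
  have spanN : ∀ r : R, r ∈ I → r ≠ 0 → Ideal.span {r} ∈ N := fun r h1 h2 => ⟨r, h1, h2, rfl⟩
  let σf : R → H := fun r => if h : r ∈ I ∧ r ≠ 0 then (aw r) • vsel (Ideal.span {r}) else 0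
  have σf0 : ∀ r : R, ¬(r ∈ I ∧ r ≠ 0) → σf r = 0 := fun r h => dif_neg h
  have σfval : ∀ r : R, (r ∈ I ∧ r ≠ 0) → σf r = (aw r) • vsel (Ideal.span {r}) :=
    fun r h => dif_pos h
  have keycompat : ∀ r s : R, r ∈ I → s ∈ I → r ≠ 0 → s ≠ 0 → ∀ β : R, r = β * s →
      σf r = β • σf s := by
    intro r s hrI hsI hr0 hs0 β hβ
    have hrN := spanN r hrI hr0
    have hsN := spanN s hsI hs0
    have hle : Ideal.span {r} ≤ Ideal.span ({s} : Set R) := by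
      rw [Ideal.span_singleton_le_span_singleton]
      exact ⟨β, by rw [hβ, mul_comm]⟩
    rw [σfval r ⟨hrI, hr0⟩, σfval s ⟨hsI, hs0⟩, vcoh _ hrN _ hsN hle, smul_smul, smul_smul]
    have hκ : (aw r * ew (Ideal.span {r}) (Ideal.span {s}) - β * aw s) *
        rep (Ideal.span ({s} : Set R)) = 0 := by
      rw [sub_mul, mul_assoc, ewS _ hrN _ hsN hle, aw_spec r hrI hr0, mul_assoc,
        aw_spec s hsI hs0, ← hβ, sub_self]
    have h0 := vann _ hsN _ hκ
    rw [sub_smul] at h0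
    exact sub_eq_zero.1 h0
  have σsmul : ∀ (β r : R), r ∈ I → σf (β * r) = β • σf r := by
    intro β r hrI
    by_cases hr0 : r = 0
    · rw [hr0, mul_zero, σf0 0 (fun h => h.2 rfl), smul_zero]
    by_cases hβr : β * r = 0
    · rw [hβr, σf0 0 (fun h => h.2 rfl), σfval r ⟨hrI, hr0⟩, smul_smul]
      have hκ : (β * aw r) * rep (Ideal.span ({r} : Set R)) = 0 := by
        rw [mul_assoc, aw_spec r hrI hr0, hβr]
      exact (vann _ (spanN r hrI hr0) _ hκ).symm
    · exact keycompat (β * r) r (I.mul_mem_left β hrI) hrI hβr hr0 β rfl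
  have σadd : ∀ r s : R, r ∈ I → s ∈ I → σf (r + s) = σf r + σf s := by
    intro r s hrI hsI
    by_cases hr0 : r = 0
    · rw [hr0, zero_add, σf0 0 (fun h => h.2 rfl), zero_add]
    by_cases hs0 : s = 0
    · rw [hs0, add_zero, σf0 0 (fun h => h.2 rfl), add_zero]
    obtain ⟨c, hc | hc⟩ := s6_comp hval r s
    · by_cases hrs : r + s = 0
      · rw [hrs, σf0 0 (fun h => h.2 rfl)]
        have h1 : σf r = c • σf s := by rw [hc]; exact σsmul c s hsI
        rw [h1, σfval s ⟨hsI, hs0⟩]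
        have hκ : ((c + 1) * aw s) * rep (Ideal.span ({s} : Set R)) = 0 := by
          rw [mul_assoc, aw_spec s hsI hs0]
          calc (c + 1) * s = r + s := by rw [hc]; ring
            _ = 0 := hrs
        have h2 := vann _ (spanN s hsI hs0) _ hκ
        rw [show (c + 1) * aw s = c * aw s + aw s by ring, add_smul] at h2
        rw [smul_smul]
        exact h2.symm
      · have h1 : σf (r + s) = (c + 1) • σf s := by
          have he : r + s = (c + 1) * s := by rw [hc]; ring
          rw [he]; exact σsmul (c + 1) s hsI
        have h2 : σf r = c • σf s := by rw [hc]; exact σsmul c s hsI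
        rw [h1, h2, add_smul, one_smul]
    · by_cases hrs : r + s = 0
      · rw [hrs, σf0 0 (fun h => h.2 rfl)]
        have h1 : σf s = c • σf r := by rw [hc]; exact σsmul c r hrI
        rw [h1, σfval r ⟨hrI, hr0⟩]
        have hκ : ((1 + c) * aw r) * rep (Ideal.span ({r} : Set R)) = 0 := by
          rw [mul_assoc, aw_spec r hrI hr0]
          calc (1 + c) * r = r + s := by rw [hc]; ring
            _ = 0 := hrs
        have h2 := vann _ (spanN r hrI hr0) _ hκ
        rw [show (1 + c) * aw r = aw r + c * aw r by ring, add_smul] at h2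
        rw [smul_smul]
        exact h2.symm
      · have h1 : σf (r + s) = (1 + c) • σf r := by
          have he : r + s = (1 + c) * r := by rw [hc]; ring
          rw [he]; exact σsmul (1 + c) r hrI
        have h2 : σf s = c • σf r := by rw [hc]; exact σsmul c r hrI
        rw [h1, h2, add_smul, one_smul]
  let σ : ↥I →ₗ[R] H :=
    { toFun := fun y => σf y.1
      map_add' := fun y z => σadd y.1 z.1 y.2 z.2
      map_smul' := fun β y => σsmul β y.1 y.2 }
  obtain ⟨F, hF⟩ := hinj.out (Submodule.subtype I) (Submodule.injective_subtype I) σ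
  refine ⟨T.mkQ.comp F, ?_⟩
  intro r hr
  have hFr : F r = σf r := hF ⟨r, hr⟩
  rw [LinearMap.comp_apply, hFr]
  by_cases hr0 : r = 0
  · rw [σf0 r (fun h => h.2 hr0), map_zero]
    have h0 : (⟨r, hr⟩ : ↥I) = 0 := Subtype.ext (by simpa using hr0)
    rw [h0, map_zero]
  · have hN := spanN r hr hr0
    rw [σfval r ⟨hr, hr0⟩, map_smul, vπ _ hN, ← map_smul φ]
    congr 1
    apply Subtype.ext
    simpa [smul_eq_mul] using aw_spec r hr hr0




end Stmt6Baer

/-- Let `R` be an almost maximal valuation ring with ideal of zerodivisors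
`Z`, `H` an injective hull of `R/Z` and `x ∈ H` with `(0:x) = Z`. Then for every proper
faithful ideal `A` of `R`, `H/Ax` is an injective hull of `R/A`. -/
theorem stmt_6 (R : Type u) [CommRing R] (hval : IdealsTotallyOrdered R)
    (ham : AlmostMaximalRing R)
    (Z : Ideal R) (hZ : ∀ r : R, r ∈ Z ↔ ∃ s : R, s ≠ 0 ∧ r * s = 0)
    (H : Type u) [AddCommGroup H] [Module R H]
    (ιH : (R ⧸ Z) →ₗ[R] H) (hH : IsInjectiveHull R ιH)
    (x : H) (hannx : ∀ r : R, r • x = 0 ↔ r ∈ Z)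
    (A : Ideal R) (hA : A ≠ ⊤) (hAfaithful : ∀ r : R, (∀ a ∈ A, r * a = 0) → r = 0) :
    ∃ f : (R ⧸ A) →ₗ[R]
        (H ⧸ Submodule.map (LinearMap.toSpanSingleton R H x) A),
      IsInjectiveHull R f := by
  classical
  obtain ⟨hinj, hιinj, hess⟩ := hH
  have hval' : ∀ I J : Ideal R, I ≤ J ∨ J ≤ I := hval
  have hZA : Z ≤ A := s6_ZleA hZ hval' hAfaithful
  have hx0 : x ≠ 0 := fun h => s6_one_not hZ ((hannx 1).1 (by rw [h, smul_zero]))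
  set T := Submodule.map (LinearMap.toSpanSingleton R H x) A with hTdef
  have hker : A ≤ LinearMap.ker ((T.mkQ).comp (LinearMap.toSpanSingleton R H x)) := by
    intro a ha
    rw [LinearMap.mem_ker, LinearMap.comp_apply, LinearMap.toSpanSingleton_apply,
      Submodule.mkQ_apply, Submodule.Quotient.mk_eq_zero]
    exact s6_memT.2 ⟨a, ha, rfl⟩
  set f := Submodule.liftQ A ((T.mkQ).comp (LinearMap.toSpanSingleton R H x)) hker with hfdef
  have fap : ∀ r : R, f (Submodule.Quotient.mk r) = T.mkQ (r • x) := by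
    intro r
    rw [hfdef, Submodule.liftQ_apply, LinearMap.comp_apply, LinearMap.toSpanSingleton_apply]
  refine ⟨f, ?_, ?_, ?_⟩
  · exact Module.Baer.injective
      (s6_baer hval' ham hZ hιinj hess hinj hannx hA hAfaithful)
  · intro y y' hyy
    obtain ⟨r, rfl⟩ := Submodule.Quotient.mk_surjective A y
    obtain ⟨r', rfl⟩ := Submodule.Quotient.mk_surjective A y'
    rw [fap, fap, Submodule.mkQ_apply, Submodule.mkQ_apply] at hyy
    have hmem : (r - r') • x ∈ T := by
      rw [sub_smul]
      exact (Submodule.Quotient.eq T).1 hyy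
    exact (Submodule.Quotient.eq A).2 ((s6_smulxT hannx hZA).1 hmem)
  · intro K hK
    obtain ⟨yq, hyqK, hyq0⟩ := (Submodule.ne_bot_iff K).1 hK
    obtain ⟨y, rfl⟩ := Submodule.mkQ_surjective T yq
    have hyT : y ∉ T := by
      intro h
      exact hyq0 (by rw [Submodule.mkQ_apply, Submodule.Quotient.mk_eq_zero]; exact h)
    have hy0 : y ≠ 0 := fun h => hyT (h ▸ T.zero_mem)
    obtain ⟨p, q, hpq, hq, hne⟩ : ∃ p q : R, p • y = q • x ∧ q ∉ Z ∧ q • x ≠ 0 := by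
      obtain ⟨w1, hw1, hw10⟩ := (Submodule.ne_bot_iff _).1 (hess (Submodule.span R {y})
        (by simpa [Submodule.span_singleton_eq_bot] using hy0))
      obtain ⟨ρ₁, hρ₁⟩ := Submodule.mem_span_singleton.1 hw1.1
      obtain ⟨q₁, hq₁⟩ := hw1.2
      obtain ⟨w2, hw2, hw20⟩ := (Submodule.ne_bot_iff _).1 (hess (Submodule.span R {x})
        (by simpa [Submodule.span_singleton_eq_bot] using hx0))
      obtain ⟨ρ₂, hρ₂⟩ := Submodule.mem_span_singleton.1 hw2.1
      obtain ⟨q₂, hq₂⟩ := hw2.2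
      obtain ⟨m₁, rfl⟩ := Submodule.Quotient.mk_surjective Z q₁
      obtain ⟨m₂, rfl⟩ := Submodule.Quotient.mk_surjective Z q₂
      obtain ⟨d, hd | hd⟩ := s6_comp hval' m₁ m₂
      · have he : ρ₁ • y = (d * ρ₂) • x := by
          calc ρ₁ • y = w1 := hρ₁
            _ = ιH (Submodule.Quotient.mk m₁) := hq₁.symm
            _ = ιH (d • Submodule.Quotient.mk m₂) := by
                rw [← Submodule.Quotient.mk_smul, smul_eq_mul, ← hd]
            _ = d • ιH (Submodule.Quotient.mk m₂) := map_smul _ _ _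
            _ = d • w2 := by rw [hq₂]
            _ = d • (ρ₂ • x) := by rw [← hρ₂]
            _ = (d * ρ₂) • x := by rw [smul_smul]
        have hne' : (d * ρ₂) • x ≠ 0 := by rw [← he, hρ₁]; exact hw10
        exact ⟨ρ₁, d * ρ₂, he, fun h => hne' ((hannx _).2 h), hne'⟩
      · have he : (d * ρ₁) • y = ρ₂ • x := by
          calc (d * ρ₁) • y = d • (ρ₁ • y) := by rw [smul_smul]
            _ = d • w1 := by rw [← hρ₁]
            _ = d • ιH (Submodule.Quotient.mk m₁) := by rw [hq₁]
            _ = ιH (d • Submodule.Quotient.mk m₁) := (map_smul _ _ _).symm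
            _ = ιH (Submodule.Quotient.mk m₂) := by
                rw [← Submodule.Quotient.mk_smul, smul_eq_mul, ← hd]
            _ = w2 := hq₂
            _ = ρ₂ • x := hρ₂.symm
        have hne' : ρ₂ • x ≠ 0 := by rw [hρ₂]; exact hw20
        exact ⟨d * ρ₁, ρ₂, he, fun h => hne' ((hannx _).2 h), hne'⟩
    obtain ⟨w, hw⟩ := s6_regdiv hZ hinj hq y
    have hpw : p • w = x := by
      have key : q • (p • w - x) = 0 := by
        rw [smul_sub, smul_comm q p, hw, hpq, sub_self]
      exact sub_eq_zero.1 (s6_reginj (ιH := ιH) hZ hιinj hess hq key)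
    obtain ⟨c, hc | hc⟩ := s6_comp hval' p q
    · -- p = c * q : x = c • y
      have hx : x = c • y := by rw [← hpw, hc, ← smul_smul, hw]
      have hne1 : T.mkQ x ≠ 0 := by
        rw [Ne, Submodule.mkQ_apply, Submodule.Quotient.mk_eq_zero]
        intro hxT
        have h1 : (1 : R) ∈ A := (s6_smulxT hannx hZA).1 (by rw [one_smul]; exact hxT)
        exact hA ((Ideal.eq_top_iff_one A).2 h1)
      have hmem1 : T.mkQ x ∈ K := by
        rw [hx, map_smul]
        exact K.smul_mem c hyqK
      have hmem2 : T.mkQ x ∈ LinearMap.range f := by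
        refine ⟨Submodule.Quotient.mk 1, ?_⟩
        rw [fap, one_smul]
      intro hbot
      apply hne1
      have : T.mkQ x ∈ K ⊓ LinearMap.range f := ⟨hmem1, hmem2⟩
      rw [hbot, Submodule.mem_bot] at this
      exact this
    · -- q = c * p : y = c • x
      have hy : y = c • x := by rw [← hw, hc, ← smul_smul, hpw]
      have hmem2 : T.mkQ y ∈ LinearMap.range f := by
        refine ⟨Submodule.Quotient.mk c, ?_⟩
        rw [fap, ← hy]
      intro hbot
      apply hyq0
      have : T.mkQ y ∈ K ⊓ LinearMap.range f := ⟨hyqK, hmem2⟩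
      rw [hbot, Submodule.mem_bot] at this
      exact this
end

section
/- Let R be a valuation ring with set of zerodivisors Z, let E = E(R) be an injective hull of R and H = E(R/Z) an injective hull of R/Z. Then: (1) E and H are flat R-modules; (2) E and H are isomorphic R-modules if and only if Z is not faithful, i.e. (0:Z) ≠ 0. -/
universe u

section Aux
variable {R : Type u} [CommRing R]

lemma fg_principal (hval : IdealsTotallyOrdered R) (I : Ideal R) (hI : I.FG) :
    ∃ r : R, I = Ideal.span {r} := by
  obtain ⟨s, rfl⟩ := hI
  classical
  induction s using Finset.induction_on with
  | empty => exact ⟨0, by rw [Finset.coe_empty, Ideal.span_empty, (Ideal.span_singleton_eq_bot).mpr rfl]⟩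
  | @insert a s ha ih =>
    obtain ⟨r, hr⟩ := ih
    rw [Finset.coe_insert, Ideal.span_insert, hr]
    rcases hval (Ideal.span {a}) (Ideal.span {r}) with h | h
    · exact ⟨r, sup_eq_right.mpr h⟩
    · exact ⟨a, sup_eq_left.mpr h⟩

lemma div_lemma {M : Type u} [AddCommGroup M] [Module R M] (hM : Module.Injective R M)
    (x : M) (t : R) (h : ∀ u : R, u * t = 0 → u • x = 0) : ∃ y : M, t • y = x := by
  set μ : R →ₗ[R] R := LinearMap.toSpanSingleton R R t
  set ψ : R →ₗ[R] M := LinearMap.toSpanSingleton R M x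
  have hker : LinearMap.ker μ ≤ LinearMap.ker ψ := by
    intro u hu
    simp only [μ, LinearMap.mem_ker, LinearMap.toSpanSingleton_apply, smul_eq_mul] at hu
    simpa [ψ, LinearMap.toSpanSingleton_apply] using h u hu
  set f₀ : (R ⧸ LinearMap.ker μ) →ₗ[R] M := Submodule.liftQ _ ψ hker
  set e : (R ⧸ LinearMap.ker μ) ≃ₗ[R] LinearMap.range μ := LinearMap.quotKerEquivRange μ
  set f : (LinearMap.range μ) →ₗ[R] M := f₀ ∘ₗ (e.symm : LinearMap.range μ →ₗ[R] _)
  obtain ⟨g, hg⟩ := hM.out (LinearMap.range μ).subtype (Submodule.injective_subtype _) f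
  refine ⟨g 1, ?_⟩
  have ht : t ∈ LinearMap.range μ := ⟨1, by simp [μ]⟩
  have h1 : e (Submodule.Quotient.mk (1:R)) = ⟨t, ht⟩ := by
    apply Subtype.ext
    rw [show e = μ.quotKerEquivRange from rfl, LinearMap.quotKerEquivRange_apply_mk]
    simp [μ]
  have h2 := hg ⟨t, ht⟩
  rw [Submodule.subtype_apply] at h2
  have h3 : f ⟨t, ht⟩ = f₀ (Submodule.Quotient.mk (1:R)) := by
    rw [show f = f₀ ∘ₗ (e.symm : LinearMap.range μ →ₗ[R] _) from rfl]
    simp only [LinearMap.comp_apply]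
    congr 1
    rw [← h1, LinearEquiv.coe_coe, LinearEquiv.symm_apply_apply]
  have h4 : f₀ (Submodule.Quotient.mk (1:R)) = x := by
    rw [show f₀ = Submodule.liftQ _ ψ hker from rfl, Submodule.liftQ_apply]
    simp [ψ]
  calc t • g 1 = g t := by rw [← map_smul, smul_eq_mul, mul_one]
    _ = x := by rw [h2, h3, h4]

lemma core_lemma (hval : IdealsTotallyOrdered R) (r s a' w : R) (P : R → Prop)
    (hr : r ≠ 0) (ha' : a' ≠ 0) (hrw : r = w * s) (hwa : w * a' = 0)
    (H4 : ∀ d : R, d * a' = 0 → P (d * s)) :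
    ∃ g : R, r * g = 0 ∧ ∀ z : R, z * g = 0 → P z := by
  rcases hval (Ideal.span {a'}) (Ideal.span {s}) with h | h
  · obtain ⟨g, hg⟩ := Ideal.mem_span_singleton'.mp (h (Ideal.mem_span_singleton_self a'))
    refine ⟨g, ?_, ?_⟩
    · calc r * g = w * (g * s) := by rw [hrw]; ring
        _ = 0 := by rw [hg]; exact hwa
    · intro z hz
      rcases hval (Ideal.span {s}) (Ideal.span {z}) with h' | h'
      · obtain ⟨d, hd⟩ := Ideal.mem_span_singleton'.mp (h' (Ideal.mem_span_singleton_self s))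
        exfalso
        apply ha'
        calc a' = g * s := hg.symm
          _ = d * (z * g) := by rw [← hd]; ring
          _ = 0 := by rw [hz, mul_zero]
      · obtain ⟨d, hd⟩ := Ideal.mem_span_singleton'.mp (h' (Ideal.mem_span_singleton_self z))
        have hda : d * a' = 0 := by
          calc d * a' = d * (g * s) := by rw [hg]
            _ = z * g := by rw [← hd]; ring
            _ = 0 := hz
        have := H4 d hda
        rwa [hd] at this
  · obtain ⟨c, hc⟩ := Ideal.mem_span_singleton'.mp (h (Ideal.mem_span_singleton_self s))
    exfalso
    apply hr
    calc r = w * s := hrw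
      _ = c * (w * a') := by rw [← hc]; ring
      _ = 0 := by rw [hwa, mul_zero]

open TensorProduct in
lemma flat_of_key (hval : IdealsTotallyOrdered R) (M : Type u) [AddCommGroup M] [Module R M]
    (hK : ∀ (r : R) (x : M), r • x = 0 → ∃ (g : R) (y : M), r * g = 0 ∧ g • y = x) :
    Module.Flat R M := by
  rw [Module.Flat.iff_rTensor_injective]
  intro I hFG
  obtain ⟨r, hI⟩ := fg_principal hval I hFG
  subst hI
  rw [injective_iff_map_eq_zero]
  intro ξ hξ
  have rep : ∀ ζ : (Ideal.span {r} : Ideal R) ⊗[R] M, ∃ x : M,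
      ζ = (⟨r, Ideal.mem_span_singleton_self r⟩ : Ideal.span {r}) ⊗ₜ[R] x := by
    intro ζ
    induction ζ using TensorProduct.induction_on with
    | zero => exact ⟨0, by rw [TensorProduct.tmul_zero]⟩
    | tmul u x =>
      obtain ⟨c, hc⟩ := Ideal.mem_span_singleton'.mp u.2
      refine ⟨c • x, ?_⟩
      have hcu : (c • (⟨r, Ideal.mem_span_singleton_self r⟩ : Ideal.span {r})) = u :=
        Subtype.ext (by simpa [smul_eq_mul] using hc)
      rw [TensorProduct.tmul_smul, TensorProduct.smul_tmul', hcu]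
    | add ζ₁ ζ₂ ih₁ ih₂ =>
      obtain ⟨x₁, rfl⟩ := ih₁
      obtain ⟨x₂, rfl⟩ := ih₂
      exact ⟨x₁ + x₂, by rw [TensorProduct.tmul_add]⟩
  obtain ⟨x, rfl⟩ := rep ξ
  rw [LinearMap.rTensor_tmul] at hξ
  have h0 : r • x = 0 := by
    have := congrArg (TensorProduct.lid R M) hξ
    simpa using this
  obtain ⟨g, y, hg, hy⟩ := hK r x h0
  have hz : (g • (⟨r, Ideal.mem_span_singleton_self r⟩ : Ideal.span {r}))
      = (0 : Ideal.span {r}) := by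
    apply Subtype.ext
    simpa [smul_eq_mul, mul_comm] using hg
  rw [← hy, TensorProduct.tmul_smul, TensorProduct.smul_tmul', hz, TensorProduct.zero_tmul]

lemma keyE (hval : IdealsTotallyOrdered R)
    {E : Type u} [AddCommGroup E] [Module R E]
    (ιE : R →ₗ[R] E) (hE : IsInjectiveHull R ιE) :
    ∀ (r : R) (x : E), r • x = 0 → ∃ (g : R) (y : E), r * g = 0 ∧ g • y = x := by
  intro r x hrx
  by_cases hx : x = 0
  · exact ⟨0, 0, mul_zero r, by rw [hx, smul_zero]⟩
  by_cases hr : r = 0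
  · exact ⟨1, x, by rw [hr, zero_mul], one_smul R x⟩
  have hspan : Submodule.span R {x} ≠ ⊥ := by
    simpa [Submodule.span_singleton_eq_bot] using hx
  obtain ⟨y, hy, hy0⟩ := (Submodule.ne_bot_iff _).mp (hE.2.2 _ hspan)
  rw [Submodule.mem_inf] at hy
  obtain ⟨s, hs⟩ := Submodule.mem_span_singleton.mp hy.1
  obtain ⟨a, hA⟩ := hy.2
  have ha : a ≠ 0 := fun h => hy0 (by rw [← hA, h, map_zero])
  obtain ⟨w, hw⟩ : ∃ w, w * s = r := by
    rcases hval (Ideal.span {s}) (Ideal.span {r}) with h | h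
    · obtain ⟨c, hc⟩ := Ideal.mem_span_singleton'.mp (h (Ideal.mem_span_singleton_self s))
      exfalso
      apply hy0
      rw [← hs, ← hc, mul_smul, hrx, smul_zero]
    · exact Ideal.mem_span_singleton'.mp (h (Ideal.mem_span_singleton_self r))
  have hwa : w * a = 0 := by
    apply hE.2.1
    rw [map_zero, ← smul_eq_mul, map_smul, hA, ← hs, ← mul_smul, hw, hrx]
  have H4 : ∀ d : R, d * a = 0 → (d * s) • x = 0 := by
    intro d hd
    rw [mul_smul, hs, ← hA, ← map_smul, smul_eq_mul, hd, map_zero]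
  obtain ⟨g, hg1, hg2⟩ := core_lemma hval r s a w (fun z => z • x = 0) hr ha hw.symm hwa H4
  obtain ⟨y', hy'⟩ := div_lemma hE.1 x g hg2
  exact ⟨g, y', hg1, hy'⟩

lemma keyH (hval : IdealsTotallyOrdered R) (Z : Ideal R)
    (hZ : ∀ r : R, r ∈ Z ↔ ∃ s : R, s ≠ 0 ∧ r * s = 0)
    {H : Type u} [AddCommGroup H] [Module R H]
    (ιH : (R ⧸ Z) →ₗ[R] H) (hH : IsInjectiveHull R ιH) :
    ∀ (r : R) (x : H), r • x = 0 → ∃ (g : R) (y : H), r * g = 0 ∧ g • y = x := by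
  intro r x hrx
  by_cases hx : x = 0
  · exact ⟨0, 0, mul_zero r, by rw [hx, smul_zero]⟩
  by_cases hr : r = 0
  · exact ⟨1, x, by rw [hr, zero_mul], one_smul R x⟩
  have hspan : Submodule.span R {x} ≠ ⊥ := by
    simpa [Submodule.span_singleton_eq_bot] using hx
  obtain ⟨y, hy, hy0⟩ := (Submodule.ne_bot_iff _).mp (hH.2.2 _ hspan)
  rw [Submodule.mem_inf] at hy
  obtain ⟨s, hs⟩ := Submodule.mem_span_singleton.mp hy.1
  obtain ⟨ab, hA⟩ := hy.2
  obtain ⟨a, rfl⟩ := Submodule.Quotient.mk_surjective Z ab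
  have haZ : a ∉ Z := by
    intro h
    apply hy0
    rw [← hA, (Submodule.Quotient.mk_eq_zero Z).mpr h, map_zero]
  obtain ⟨w, hw⟩ : ∃ w, w * s = r := by
    rcases hval (Ideal.span {s}) (Ideal.span {r}) with h | h
    · obtain ⟨c, hc⟩ := Ideal.mem_span_singleton'.mp (h (Ideal.mem_span_singleton_self s))
      exfalso
      apply hy0
      rw [← hs, ← hc, mul_smul, hrx, smul_zero]
    · exact Ideal.mem_span_singleton'.mp (h (Ideal.mem_span_singleton_self r))
  have hwaZ : w * a ∈ Z := by
    rw [← Submodule.Quotient.mk_eq_zero Z]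
    apply hH.2.1
    rw [map_zero, show ((Submodule.Quotient.mk (w * a) : R ⧸ Z)) =
      w • (Submodule.Quotient.mk a : R ⧸ Z) from by rw [← Submodule.Quotient.mk_smul, smul_eq_mul],
      map_smul, hA, ← hs, ← mul_smul, hw, hrx]
  obtain ⟨e, he0, hee⟩ := (hZ (w * a)).mp hwaZ
  have ha' : a * e ≠ 0 := by
    intro h
    exact haZ ((hZ a).mpr ⟨e, he0, h⟩)
  have hwa : w * (a * e) = 0 := by rw [← mul_assoc]; exact hee
  have H4 : ∀ d : R, d * (a * e) = 0 → (d * s) • x = 0 := by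
    intro d hd
    have hdZ : d * a ∈ Z := (hZ (d * a)).mpr ⟨e, he0, by rw [mul_assoc]; exact hd⟩
    rw [mul_smul, hs, ← hA, ← map_smul, show (d • (Submodule.Quotient.mk a : R ⧸ Z)) =
      (Submodule.Quotient.mk (d * a) : R ⧸ Z) from by rw [← Submodule.Quotient.mk_smul, smul_eq_mul],
      (Submodule.Quotient.mk_eq_zero Z).mpr hdZ, map_zero]
  obtain ⟨g, hg1, hg2⟩ := core_lemma hval r s (a * e) w (fun z => z • x = 0) hr ha' hw.symm hwa H4
  obtain ⟨y', hy'⟩ := div_lemma hH.1 x g hg2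
  exact ⟨g, y', hg1, hy'⟩

end Aux

/-- Over a valuation ring `R` with ideal of zerodivisors `Z`, the injective
hulls `E = E(R)` and `H = E(R/Z)` are flat, and `E ≅ H` iff `Z` is not faithful. -/
theorem stmt_7 (R : Type u) [CommRing R] (hval : IdealsTotallyOrdered R)
    (Z : Ideal R) (hZ : ∀ r : R, r ∈ Z ↔ ∃ s : R, s ≠ 0 ∧ r * s = 0)
    (E : Type u) [AddCommGroup E] [Module R E]
    (ιE : R →ₗ[R] E) (hE : IsInjectiveHull R ιE)
    (H : Type u) [AddCommGroup H] [Module R H]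
    (ιH : (R ⧸ Z) →ₗ[R] H) (hH : IsInjectiveHull R ιH) :
    (Module.Flat R E ∧ Module.Flat R H) ∧
    (Nonempty (E ≃ₗ[R] H) ↔ ∃ r : R, r ≠ 0 ∧ ∀ z ∈ Z, r * z = 0) := by
  obtain ⟨s₀, hs₀, -⟩ := (hZ 0).mp Z.zero_mem
  have hnt : (1 : R) ≠ 0 := by
    intro h
    exact hs₀ (by rw [← one_mul s₀, h, zero_mul])
  constructor
  · exact ⟨flat_of_key hval E (keyE hval ιE hE), flat_of_key hval H (keyH hval Z hZ ιH hH)⟩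
  constructor
  · -- E ≃ H → Z not faithful
    rintro ⟨e⟩
    have hKne : Submodule.map (e : E →ₗ[R] H) (LinearMap.range ιE) ≠ ⊥ := by
      intro h
      have hmem : e (ιE 1) ∈ Submodule.map (e : E →ₗ[R] H) (LinearMap.range ιE) :=
        ⟨ιE 1, LinearMap.mem_range_self ιE 1, rfl⟩
      rw [h, Submodule.mem_bot] at hmem
      have : ιE 1 = ιE 0 := by rw [map_zero]; exact e.injective (by rw [hmem, map_zero])
      exact hnt (hE.2.1 this)
    obtain ⟨v, hv, hv0⟩ := (Submodule.ne_bot_iff _).mp (hH.2.2 _ hKne)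
    rw [Submodule.mem_inf] at hv
    obtain ⟨w, hwmem, hwe⟩ := hv.1
    obtain ⟨u, hu⟩ := hwmem
    obtain ⟨m, hm⟩ := hv.2
    obtain ⟨vv, rfl⟩ := Submodule.Quotient.mk_surjective Z m
    refine ⟨u, ?_, ?_⟩
    · intro h
      apply hv0
      rw [← hwe, ← hu, h, map_zero, map_zero]
    · intro z hzZ
      have h2 : z • v = 0 := by
        rw [← hm, ← map_smul, show (z • (Submodule.Quotient.mk vv : R ⧸ Z)) =
          (Submodule.Quotient.mk (z * vv) : R ⧸ Z) from by
            rw [← Submodule.Quotient.mk_smul, smul_eq_mul],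
          (Submodule.Quotient.mk_eq_zero Z).mpr (Ideal.mul_mem_right vv Z hzZ), map_zero]
      have hwe' : e w = v := hwe
      have h3 : e (ιE (z * u)) = 0 := by
        rw [← smul_eq_mul, map_smul, hu, map_smul, hwe', h2]
      have h4 : z * u = 0 := by
        apply hE.2.1
        rw [map_zero]
        exact e.injective (by rw [h3, map_zero])
      rw [mul_comm]
      exact h4
  · -- Z not faithful → E ≃ H
    rintro ⟨c, hc0, hcZ⟩
    have hker : Z ≤ LinearMap.ker (ιE ∘ₗ LinearMap.toSpanSingleton R R c) := by
      intro z hz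
      rw [LinearMap.mem_ker, LinearMap.comp_apply, LinearMap.toSpanSingleton_apply,
        smul_eq_mul, mul_comm, hcZ z hz, map_zero]
    set f : (R ⧸ Z) →ₗ[R] E := Submodule.liftQ Z _ hker with hfdef
    have hf : ∀ u : R, f (Submodule.Quotient.mk u) = ιE (u * c) := by
      intro u
      rw [hfdef, Submodule.liftQ_apply, LinearMap.comp_apply, LinearMap.toSpanSingleton_apply,
        smul_eq_mul]
    have hfinj : Function.Injective f := by
      rw [injective_iff_map_eq_zero]
      intro q hq
      obtain ⟨u, rfl⟩ := Submodule.Quotient.mk_surjective Z q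
      rw [hf] at hq
      have huc : u * c = 0 := hE.2.1 (by rw [map_zero]; exact hq)
      exact (Submodule.Quotient.mk_eq_zero Z).mpr ((hZ u).mpr ⟨c, hc0, huc⟩)
    obtain ⟨g, hg⟩ := hE.1.out ιH hH.2.1 f
    have hginj : Function.Injective g := by
      rw [← LinearMap.ker_eq_bot]
      by_contra hk
      obtain ⟨v, hv, hv0⟩ := (Submodule.ne_bot_iff _).mp (hH.2.2 _ hk)
      rw [Submodule.mem_inf] at hv
      obtain ⟨m, hm⟩ := hv.2
      have : f m = 0 := by rw [← hg, hm]; exact hv.1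
      have hm0 : m = 0 := hfinj (by rw [this, map_zero])
      exact hv0 (by rw [← hm, hm0, map_zero])
    obtain ⟨π, hπ⟩ := hH.1.out g hginj LinearMap.id
    have hπker : LinearMap.ker π = ⊥ := by
      by_contra hk
      obtain ⟨v, hv, hv0⟩ := (Submodule.ne_bot_iff _).mp (hE.2.2 _ hk)
      rw [Submodule.mem_inf] at hv
      obtain ⟨u, hu⟩ := hv.2
      have hu0 : u ≠ 0 := by
        intro h
        exact hv0 (by rw [← hu, h, map_zero])
      have hπv : π v = 0 := hv.1
      rcases hval (Ideal.span {u}) (Ideal.span {c}) with h | h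
      · obtain ⟨d, hd⟩ := Ideal.mem_span_singleton'.mp (h (Ideal.mem_span_singleton_self u))
        -- u = d * c : v = g (d • ιH (mk 1)) and π v = 0 forces v = 0
        have hveq : v = g (d • ιH (Submodule.Quotient.mk 1)) := by
          rw [map_smul, hg, hf, one_mul, ← map_smul, ← hu, ← hd, ← smul_eq_mul, map_smul]
        apply hv0
        rw [hveq, show (d • ιH (Submodule.Quotient.mk 1)) = 0 from ?_, map_zero]
        have := hπ (d • ιH (Submodule.Quotient.mk 1))
        rw [LinearMap.id_apply] at this
        rw [← this, ← hveq, hπv]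
      · obtain ⟨d, hd⟩ := Ideal.mem_span_singleton'.mp (h (Ideal.mem_span_singleton_self c))
        -- c = d * u : ιE c = d • v ∈ ker π, but π (ιE c) = ιH (mk 1) ≠ 0
        have hx₀ : ιE c = d • v := by rw [← hu, ← map_smul, smul_eq_mul, hd]
        have hπx₀ : π (ιE c) = 0 := by rw [hx₀, map_smul, hπv, smul_zero]
        have hgx : ιE c = g (ιH (Submodule.Quotient.mk 1)) := by rw [hg, hf, one_mul]
        have h1Z : ιH (Submodule.Quotient.mk 1) = 0 := by
          have := hπ (ιH (Submodule.Quotient.mk 1))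
          rw [LinearMap.id_apply] at this
          rw [← this, ← hgx, hπx₀]
        have : ((Submodule.Quotient.mk 1 : R ⧸ Z)) = 0 :=
          hH.2.1 (by rw [map_zero]; exact h1Z)
        have h1mem : (1 : R) ∈ Z := (Submodule.Quotient.mk_eq_zero Z).mp this
        obtain ⟨e', he'0, he'⟩ := (hZ 1).mp h1mem
        rw [one_mul] at he'
        exact he'0 he'
    have hgsurj : Function.Surjective g := by
      intro x
      refine ⟨π x, ?_⟩
      have h5 : π (g (π x) - x) = 0 := by
        rw [map_sub]
        have := hπ (π x)
        rw [LinearMap.id_apply] at this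
        rw [this, sub_self]
      have h6 : g (π x) - x = 0 := by
        have := h5
        rw [← LinearMap.mem_ker, hπker, Submodule.mem_bot] at this
        exact this
      exact sub_eq_zero.mp h6
    exact ⟨(LinearEquiv.ofBijective g ⟨hginj, hgsurj⟩).symm⟩
end

section
/- Let R be a valuation ring with maximal ideal P, let E = E(R) and F = E(R/Rr) for some nonzero r ∈ P, and let G be a locally injective R-module. Then there exists a pure exact sequence 0 → K → I → G → 0 of R-modules in which I is a direct sum of submodules each isomorphic to E or to F. -/
universe u

section AuxLemmas

open TensorProduct LinearMap Function

theorem aux_dvd_total {R : Type u} [CommRing R]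
    (hval : ∀ I J : Ideal R, I ≤ J ∨ J ≤ I) (a b : R) : a ∣ b ∨ b ∣ a := by
  rcases hval (Ideal.span {a}) (Ideal.span {b}) with h | h
  · exact Or.inr (Ideal.span_singleton_le_span_singleton.mp h)
  · exact Or.inl (Ideal.span_singleton_le_span_singleton.mp h)

theorem aux_exists_dvd {R : Type u} [CommRing R]
    (hval : ∀ I J : Ideal R, I ≤ J ∨ J ≤ I) {ρ : Type*} [Fintype ρ] [Nonempty ρ]
    (f : ρ → R) : ∃ p, ∀ q, f p ∣ f q := by
  classical
  have H : ∀ s : Finset ρ, s.Nonempty → ∃ p ∈ s, ∀ q ∈ s, f p ∣ f q := by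
    intro s hs
    induction hs using Finset.Nonempty.cons_induction with
    | singleton a => exact ⟨a, Finset.mem_singleton_self a, by simp⟩
    | cons a s ha hs ih =>
      obtain ⟨p, hp, hdvd⟩ := ih
      rcases aux_dvd_total hval (f p) (f a) with h | h
      · exact ⟨p, Finset.mem_cons_of_mem hp, by
          intro q hq
          rcases Finset.mem_cons.mp hq with rfl | hq
          · exact h
          · exact hdvd q hq⟩
      · exact ⟨a, Finset.mem_cons_self a s, by
          intro q hq
          rcases Finset.mem_cons.mp hq with rfl | hq
          · exact dvd_rfl
          · exact h.trans (hdvd q hq)⟩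
  obtain ⟨p, _, h⟩ := H Finset.univ Finset.univ_nonempty
  exact ⟨p, fun q => h q (Finset.mem_univ q)⟩


/-- Solving linear systems over a valuation ring. -/
theorem aux_solve {R : Type u} [CommRing R]
    (hval : ∀ I J : Ideal R, I ≤ J ∨ J ≤ I)
    {I : Type u} [AddCommGroup I] [Module R I] (K : Submodule R I)
    (hRD : ∀ (d : R) (z : I), d • z ∈ K → ∃ z' ∈ K, d • z' = d • z) :
    ∀ (n : ℕ) (ρ ι : Type u) (_ : Fintype ρ) (_ : Fintype ι), Fintype.card ρ = n →
      ∀ (a : ρ → ι → R) (k : ρ → I), (∀ j, k j ∈ K) →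
        ∀ y : ι → I, (∀ j, k j = ∑ i, a j i • y i) →
          ∃ y' : ι → I, (∀ i, y' i ∈ K) ∧ ∀ j, k j = ∑ i, a j i • y' i := by
  classical
  intro n
  induction n with
  | zero =>
    intro ρ ι _ _ hcard a k hk y heq
    have : IsEmpty ρ := Fintype.card_eq_zero_iff.mp hcard
    exact ⟨fun _ => 0, fun _ => K.zero_mem, fun j => this.elim j⟩
  | succ n ih =>
    intro ρ ι _ _ hcard a k hk y heq
    have hne : Nonempty ρ := Fintype.card_pos_iff.mp (by omega)
    by_cases hι : Nonempty ι
    case neg =>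
      have : IsEmpty ι := not_nonempty_iff.mp hι
      refine ⟨fun _ => 0, fun _ => K.zero_mem, fun j => ?_⟩
      rw [heq j]
      exact congrArg _ (Subsingleton.elim _ _)
    case pos =>
    obtain ⟨⟨j₀, i₀⟩, hpiv⟩ := aux_exists_dvd hval (fun p : ρ × ι => a p.1 p.2)
    obtain ⟨c, hc, hc₀⟩ : ∃ c : ρ → ι → R,
        (∀ j i, a j i = c j i * a j₀ i₀) ∧ c j₀ i₀ = 1 := by
      refine ⟨fun j i => if h : j = j₀ ∧ i = i₀ then 1 else (hpiv (j, i)).choose, ?_, ?_⟩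
      · intro j i
        by_cases h : j = j₀ ∧ i = i₀
        · obtain ⟨rfl, rfl⟩ := h; simp
        · simp only [h, dif_neg, not_false_iff]
          rw [mul_comm]
          exact (hpiv (j, i)).choose_spec
      · simp
    have hrow0 : k j₀ = a j₀ i₀ • ∑ i, c j₀ i • y i := by
      rw [heq j₀, Finset.smul_sum]
      refine Finset.sum_congr rfl fun i _ => ?_
      rw [hc j₀ i, smul_smul, mul_comm]
    obtain ⟨u', hu'K, hu'⟩ := hRD (a j₀ i₀) _ (hrow0 ▸ hk j₀)
    have hu'eq : a j₀ i₀ • u' = k j₀ := by rw [hu', hrow0]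
    have hcard' : Fintype.card {j : ρ // j ≠ j₀} = n := by
      rw [Fintype.card_subtype_compl, Fintype.card_subtype_eq, hcard]
      omega
    have sum_split : ∀ g : ι → I, ∑ i, g i = g i₀ + ∑ i : {i : ι // i ≠ i₀}, g i.1 := by
      intro g
      rw [← Finset.sum_subtype (Finset.univ.erase i₀)
        (fun i => by simp [Finset.mem_erase]) g]
      rw [← Finset.add_sum_erase _ g (Finset.mem_univ i₀)]
    have hkhateq : ∀ j : {j : ρ // j ≠ j₀}, k j.1 - c j.1 i₀ • k j₀
        = ∑ i' : {i : ι // i ≠ i₀}, (a j.1 i'.1 - c j.1 i₀ * a j₀ i'.1) • y i'.1 := by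
      intro j
      have e1 : ∑ i : ι, (a j.1 i - c j.1 i₀ * a j₀ i) • y i
          = k j.1 - c j.1 i₀ • k j₀ := by
        rw [Finset.sum_congr rfl (fun i _ => by
          rw [sub_smul, smul_smul] : ∀ i ∈ Finset.univ, (a j.1 i - c j.1 i₀ * a j₀ i) • y i
            = a j.1 i • y i - c j.1 i₀ • (a j₀ i • y i)), Finset.sum_sub_distrib,
          ← Finset.smul_sum, ← heq, ← heq]
      rw [← e1, sum_split (fun i => (a j.1 i - c j.1 i₀ * a j₀ i) • y i)]
      have e2 : a j.1 i₀ - c j.1 i₀ * a j₀ i₀ = 0 := by rw [hc j.1 i₀]; ring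
      rw [e2, zero_smul, zero_add]
    obtain ⟨yhat, hyhatK, hyhat⟩ := ih {j : ρ // j ≠ j₀} {i : ι // i ≠ i₀} _ _ hcard'
      (fun j i' => a j.1 i'.1 - c j.1 i₀ * a j₀ i'.1)
      (fun j => k j.1 - c j.1 i₀ • k j₀)
      (fun j => K.sub_mem (hk _) (K.smul_mem _ (hk _)))
      (fun i' => y i'.1) hkhateq
    set S : I := ∑ i' : {i : ι // i ≠ i₀}, c j₀ i'.1 • yhat i' with hS
    set y' : ι → I := fun i => if h : i = i₀ then u' - S else yhat ⟨i, h⟩ with hy'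
    have hy'i₀ : y' i₀ = u' - S := by simp [hy']
    have hy'ne : ∀ (i' : {i : ι // i ≠ i₀}), y' i'.1 = yhat i' := by
      intro i'
      simp only [hy', i'.2, dif_neg, not_false_iff, Subtype.coe_eta]
    have hy'K : ∀ i, y' i ∈ K := by
      intro i
      by_cases h : i = i₀
      · rw [h, hy'i₀]
        exact K.sub_mem hu'K (Submodule.sum_mem K fun i' _ => K.smul_mem _ (hyhatK i'))
      · have := hy'ne ⟨i, h⟩
        rw [this]
        exact hyhatK _
    have split' : ∀ j : ρ, ∑ i, a j i • y' i
        = a j i₀ • (u' - S) + ∑ i' : {i : ι // i ≠ i₀}, a j i'.1 • yhat i' := by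
      intro j
      rw [sum_split (fun i => a j i • y' i), hy'i₀]
      congr 1
      exact Finset.sum_congr rfl fun i' _ => by rw [hy'ne i']
    refine ⟨y', hy'K, ?_⟩
    intro j
    by_cases hj : j = j₀
    · subst hj
      rw [split' j]
      have e3 : ∑ i' : {i : ι // i ≠ i₀}, a j i'.1 • yhat i' = a j i₀ • S := by
        rw [hS, Finset.smul_sum]
        refine Finset.sum_congr rfl fun i' _ => ?_
        rw [hc j i'.1, smul_smul, mul_comm]
      rw [e3, smul_sub, ← hu'eq]
      abel
    · rw [split' j]
      have hA : a j i₀ • (u' - S) = c j i₀ • k j₀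
          - ∑ i' : {i : ι // i ≠ i₀}, (c j i₀ * a j₀ i'.1) • yhat i' := by
        rw [smul_sub]
        congr 1
        · rw [hc j i₀, mul_smul, hu'eq]
        · rw [hS, Finset.smul_sum]
          refine Finset.sum_congr rfl fun i' _ => ?_
          rw [smul_smul, hc j i₀, hc j₀ i'.1]
          ring_nf
      rw [hA]
      have hB : ∑ i' : {i : ι // i ≠ i₀}, a j i'.1 • yhat i'
            - ∑ i' : {i : ι // i ≠ i₀}, (c j i₀ * a j₀ i'.1) • yhat i'
          = k j - c j i₀ • k j₀ := by
        rw [← Finset.sum_sub_distrib]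
        rw [Finset.sum_congr rfl (fun i' _ => (sub_smul _ _ _).symm :
          ∀ i' ∈ Finset.univ, a j i'.1 • yhat i' - (c j i₀ * a j₀ i'.1) • yhat i'
            = (a j i'.1 - c j i₀ * a j₀ i'.1) • yhat i')]
        exact (hyhat ⟨j, hj⟩).symm
      have : c j i₀ • k j₀ - ∑ i' : {i : ι // i ≠ i₀}, (c j i₀ * a j₀ i'.1) • yhat i'
            + ∑ i' : {i : ι // i ≠ i₀}, a j i'.1 • yhat i'
          = c j i₀ • k j₀ + (k j - c j i₀ • k j₀) := by
        rw [← hB]; abel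
      rw [this]
      abel

/-- Generalized equational criterion for vanishing (no generation hypothesis),
at the price of enlarging the family by finitely many extra terms with zero
second component. -/
theorem aux_vanish {R : Type u} [CommRing R] {W I : Type u}
    [AddCommGroup W] [Module R W] [AddCommGroup I] [Module R I]
    {ι : Type u} [Fintype ι] (w : ι → W) (n : ι → I)
    (h : ∑ i, w i ⊗ₜ[R] n i = (0 : W ⊗[R] I)) :
    ∃ (τ : Type u) (_ : Fintype τ) (v : τ → W) (κ : Type u) (_ : Fintype κ)
      (a : ι ⊕ τ → κ → R) (y : κ → I),
      (∀ s, Sum.elim n (fun _ => (0 : I)) s = ∑ t, a s t • y t) ∧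
      (∀ t, ∑ s, a s t • Sum.elim w v s = 0) := by
  classical
  set G : ((ι ⊕ W) →₀ R) →ₗ[R] W := Finsupp.linearCombination R (Sum.elim w _root_.id)
    with hG
  have hGsingle : ∀ s : ι ⊕ W, G (Finsupp.single s 1) = Sum.elim w _root_.id s := by
    intro s; simp [hG]
  have Gsurj : Surjective G := fun w₀ => ⟨Finsupp.single (Sum.inr w₀) 1, hGsingle _⟩
  set en : ((ι ⊕ W) →₀ R) ⊗[R] I := ∑ i, Finsupp.single (Sum.inl i) (1 : R) ⊗ₜ n i with hen
  have en_ker : en ∈ ker (rTensor I G) := by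
    rw [mem_ker, hen, map_sum]
    simp only [rTensor_tmul, hGsingle, Sum.elim_inl]
    exact h
  have exact2 : Exact (rTensor I (ker G).subtype) (rTensor I G) :=
    rTensor_exact (M := ↥(ker G)) I G.exact_subtype_ker_map Gsurj
  have mem_range : en ∈ range (rTensor I (ker G).subtype) :=
    exact2.linearMap_ker_eq ▸ en_ker
  obtain ⟨kn, hkn⟩ := mem_range
  obtain ⟨ma, hma⟩ := TensorProduct.exists_finset kn
  -- coordinates
  have coord : ∀ s : ι ⊕ W,
      (∑ t : ↑ma, ((t : (↥(ker G)) × I).1.1 : (ι ⊕ W) →₀ R) s • (t : (↥(ker G)) × I).2)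
        = Sum.elim n (fun _ => (0 : I)) s := by
    intro s
    have h2 : ∑ x ∈ ma, ((x.1 : (ι ⊕ W) →₀ R) s • x.2 : I)
        = ∑ x : ι, ((Finsupp.single (Sum.inl x) (1 : R)) s • n x : I) := by
      have h1 := congrArg (fun f => finsuppScalarLeft R I (ι ⊕ W) f s) hkn
      simpa only [hma, hen, map_sum, rTensor_tmul, Submodule.coe_subtype,
        Finsupp.finset_sum_apply, finsuppScalarLeft_apply_tmul_apply] using h1
    rw [Finset.univ_eq_attach,
      Finset.sum_attach ma (fun p => ((p.1 : (ι ⊕ W) →₀ R) s • p.2 : I)), h2]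
    rcases s with i | w₀
    · rw [Finset.sum_congr rfl (fun i' _ => by
        rw [Finsupp.single_apply] :
        ∀ i' ∈ Finset.univ, (Finsupp.single (Sum.inl i') (1:R)) (Sum.inl i) • n i'
          = (if Sum.inl i' = Sum.inl i then (1:R) else 0) • n i')]
      simp [Finset.sum_ite_eq]
    · simp [Finsupp.single_apply]
  -- the extra index set : the inr-part of the supports
  set B : Finset W := (ma.sup fun t => (t.1.1 : (ι ⊕ W) →₀ R).support).preimage
    Sum.inr (Sum.inr_injective.injOn) with hB
  refine ⟨↑B, FinsetCoe.fintype B, fun b => b.1, ↑ma, FinsetCoe.fintype ma,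
    fun s t => ((t : (↥(ker G)) × I).1.1 : (ι ⊕ W) →₀ R) (Sum.map _root_.id Subtype.val s),
    fun t => (t : (↥(ker G)) × I).2, ?_, ?_⟩
  · intro s
    rcases s with i | b
    · exact (coord (Sum.inl i)).symm
    · exact (coord (Sum.inr b.1)).symm
  · -- columns: ∑_s a s t • (w or v) = G (k_t) = 0
    rintro ⟨⟨⟨kt, hktker⟩, yt⟩, htma⟩
    simp only []
    have hsupp : kt.support ⊆ Finset.univ.image (Sum.map _root_.id (Subtype.val : ↑B → W)) := by
      intro s hs
      rcases s with i | w₀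
      · exact Finset.mem_image.mpr ⟨Sum.inl i, Finset.mem_univ _, rfl⟩
      · have : w₀ ∈ B := by
          rw [hB, Finset.mem_preimage]
          exact Finset.le_sup (f := fun t : (↥(ker G)) × I =>
            (t.1.1 : (ι ⊕ W) →₀ R).support) htma hs
        exact Finset.mem_image.mpr ⟨Sum.inr ⟨w₀, this⟩, Finset.mem_univ _, rfl⟩
    have hinj : Function.Injective (Sum.map (_root_.id : ι → ι) (Subtype.val : ↑B → W)) :=
      Sum.map_injective.mpr ⟨injective_id, Subtype.val_injective⟩
    have key : ∑ s : ι ⊕ ↑B,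
        kt (Sum.map _root_.id Subtype.val s) • Sum.elim w (fun b : ↑B => b.1) s
        = G kt := by
      calc ∑ s : ι ⊕ ↑B, kt (Sum.map _root_.id Subtype.val s) • Sum.elim w (fun b : ↑B => b.1) s
          = ∑ s : ι ⊕ ↑B, kt (Sum.map _root_.id Subtype.val s)
              • Sum.elim w _root_.id (Sum.map _root_.id Subtype.val s) := by
            refine Finset.sum_congr rfl fun s _ => ?_
            rcases s with i | b <;> rfl
        _ = ∑ s' ∈ Finset.univ.image (Sum.map _root_.id (Subtype.val : ↑B → W)),
              kt s' • Sum.elim w _root_.id s' :=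
            (Finset.sum_image (s := Finset.univ)
              (f := fun s' => kt s' • Sum.elim w _root_.id s')
              (fun x _ y _ hxy => hinj hxy)).symm
        _ = ∑ s' ∈ kt.support, kt s' • Sum.elim w _root_.id s' :=
            (Finset.sum_subset hsupp (fun s _ hs => by
              rw [Finsupp.notMem_support_iff.mp hs, zero_smul])).symm
        _ = G kt := by rw [hG, Finsupp.linearCombination_apply, Finsupp.sum]
    rw [key]
    exact mem_ker.mp hktker

/-- If every finite linear system with constants in `K` solvable in `I` is solvable in
`K`, then `K` is a pure submodule of `I`. -/
theorem aux_pure {R : Type u} [CommRing R] {I : Type u} [AddCommGroup I] [Module R I]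
    (K : Submodule R I)
    (hsolv : ∀ (ρ ι : Type u) (_ : Fintype ρ) (_ : Fintype ι) (a : ρ → ι → R) (k : ρ → I),
      (∀ j, k j ∈ K) → ∀ y : ι → I, (∀ j, k j = ∑ i, a j i • y i) →
        ∃ y' : ι → I, (∀ i, y' i ∈ K) ∧ ∀ j, k j = ∑ i, a j i • y' i)
    (W : Type u) [AddCommGroup W] [Module R W] :
    Function.Injective (LinearMap.lTensor W K.subtype) := by
  classical
  refine (injective_iff_map_eq_zero _).mpr fun x hx => ?_
  obtain ⟨S, hS⟩ := TensorProduct.exists_finset x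
  have hS' : x = ∑ p : ↑S, (p : W × ↥K).1 ⊗ₜ[R] (p : W × ↥K).2 := by
    rw [hS, Finset.univ_eq_attach, Finset.sum_attach S (fun p => p.1 ⊗ₜ[R] p.2)]
  have hx' : ∑ p : ↑S, (p : W × ↥K).1 ⊗ₜ[R] ((p : W × ↥K).2 : I) = (0 : W ⊗[R] I) := by
    rw [← hx, hS', map_sum]
    exact Finset.sum_congr rfl fun p _ => rfl
  obtain ⟨τ, _, v, κ, _, a, y, h1, h2⟩ :=
    aux_vanish (fun p : ↑S => (p : W × ↥K).1) (fun p : ↑S => ((p : W × ↥K).2 : I)) hx'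
  obtain ⟨y', hy'K, hy'⟩ := hsolv (↑S ⊕ τ) κ inferInstance inferInstance a
    (Sum.elim (fun p : ↑S => ((p : W × ↥K).2 : I)) (fun _ => 0))
    (by rintro (p | j); exacts [(p : W × ↥K).2.2, K.zero_mem])
    y (fun s => h1 s)
  set Y : κ → ↥K := fun t => ⟨y' t, hy'K t⟩ with hY
  have hKeq : ∀ s : ↑S ⊕ τ,
      (Sum.elim (fun p : ↑S => (p : W × ↥K).2) (fun _ => (0 : ↥K)) s)
        = ∑ t, a s t • Y t := by
    intro s
    apply Subtype.ext
    have : ((∑ t, a s t • Y t : ↥K) : I) = ∑ t, a s t • y' t := by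
      simp [hY]
    rw [this, ← hy' s]
    rcases s with p | j <;> rfl
  have hxsum : x = ∑ s : ↑S ⊕ τ,
      (Sum.elim (fun p : ↑S => (p : W × ↥K).1) v s)
        ⊗ₜ[R] (Sum.elim (fun p : ↑S => (p : W × ↥K).2) (fun _ => (0 : ↥K)) s) := by
    rw [Fintype.sum_sum_type]
    simp only [Sum.elim_inl, Sum.elim_inr, tmul_zero, Finset.sum_const_zero, add_zero]
    exact hS'
  rw [hxsum]
  simp_rw [hKeq, tmul_sum, tmul_smul]
  rw [Finset.sum_comm]
  simp_rw [← tmul_smul, ← smul_tmul, ← sum_tmul, h2, zero_tmul, Finset.sum_const_zero]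

theorem aux_extend {R : Type u} [CommRing R] {X G : Type u}
    [AddCommGroup X] [Module R X] [AddCommGroup G] [Module R G]
    (hG : LocallyInjectiveModule R G) (x : X) (g : G)
    (hann : ∀ t : R, t • x = 0 → t • g = 0) : ∃ ψ : X →ₗ[R] G, ψ x = g := by
  set σ : R →ₗ[R] X := toSpanSingleton R X x with hσ
  set τ : R →ₗ[R] G := toSpanSingleton R G g with hτ
  have hker : ker σ ≤ ker τ := by
    intro t ht
    rw [mem_ker] at ht ⊢
    exact hann t ht
  set f : ↥(range σ) →ₗ[R] G :=
    ((ker σ).liftQ τ hker).comp (σ.quotKerEquivRange.symm.toLinearMap) with hf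
  have hFG : (range σ).FG := by
    rw [← LinearMap.span_singleton_eq_range]
    exact Submodule.fg_span_singleton x
  obtain ⟨ψ, hψ⟩ := hG X (range σ) hFG f
  refine ⟨ψ, ?_⟩
  have hx : x = σ 1 := by simp [hσ]
  have hmem : x ∈ range σ := ⟨1, hx.symm⟩
  have h1 : ψ x = f ⟨x, hmem⟩ := hψ ⟨x, hmem⟩
  rw [h1, hf]
  have h2 : σ.quotKerEquivRange.symm ⟨x, hmem⟩ = Submodule.Quotient.mk 1 := by
    rw [LinearEquiv.symm_apply_eq]
    apply Subtype.ext
    exact hx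
  simp only [coe_comp, Function.comp_apply, LinearEquiv.coe_coe, h2,
    Submodule.liftQ_apply]
  simp [hτ]



/-- `F = E(R/Rr)` contains an element with annihilator exactly `Rd`, for each `d ≠ 0`. -/
theorem aux_F_elem {R : Type u} [CommRing R]
    (hval : ∀ I J : Ideal R, I ≤ J ∨ J ≤ I)
    {r : R} (hr : r ≠ 0) (hru : ¬IsUnit r)
    {F : Type u} [AddCommGroup F] [Module R F]
    (ιF : (R ⧸ Ideal.span {r}) →ₗ[R] F)
    (hFinj : Module.Injective R F) (hιF : Function.Injective ιF)
    {d : R} (hd : d ≠ 0) :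
    ∃ a : F, d • a = 0 ∧ ∀ t : R, t • a = 0 → t ∈ Ideal.span {d} := by
  classical
  set f₀ : F := ιF (Submodule.Quotient.mk 1) with hf₀
  have hone : (Submodule.Quotient.mk (1 : R) : R ⧸ Ideal.span {r}) ≠ 0 := by
    rw [Ne, Submodule.Quotient.mk_eq_zero, Ideal.mem_span_singleton]
    intro h
    exact hru (isUnit_of_dvd_one h)
  have hannf₀ : ∀ t : R, t • f₀ = 0 ↔ r ∣ t := by
    intro t
    rw [hf₀, ← map_smul, ← map_zero ιF, hιF.eq_iff]
    have h1 : t • (Submodule.Quotient.mk (1 : R) : R ⧸ Ideal.span {r})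
        = Submodule.Quotient.mk (t * 1) := rfl
    rw [h1, mul_one, Submodule.Quotient.mk_eq_zero, Ideal.mem_span_singleton]
  have dvd_total : ∀ a b : R, a ∣ b ∨ b ∣ a := by
    intro a b
    rcases hval (Ideal.span {a}) (Ideal.span {b}) with h | h
    · exact Or.inr (Ideal.span_singleton_le_span_singleton.mp h)
    · exact Or.inl (Ideal.span_singleton_le_span_singleton.mp h)
  rcases dvd_total d r with hdr | hrd
  · -- r = d * c : take a = c • f₀
    obtain ⟨c, hc⟩ := hdr
    have hannc : ∀ s : R, s * c = 0 → d ∣ s := by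
      intro s hs
      rcases dvd_total d s with h | h
      · exact h
      · obtain ⟨e, he⟩ := h
        exfalso
        apply hr
        rw [hc, he]
        calc s * e * c = s * c * e := by ring
          _ = 0 := by rw [hs, zero_mul]
    refine ⟨c • f₀, ?_, ?_⟩
    · rw [smul_smul, hannf₀, hc]
    · intro t ht
      rw [smul_smul, hannf₀] at ht
      obtain ⟨u, hu⟩ := ht
      have h2 : (t - d * u) * c = 0 := by
        have h3 : t * c = d * c * u := by rw [← hc, ← hu]
        calc (t - d * u) * c = t * c - d * c * u := by ring
          _ = 0 := by rw [h3, sub_self]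
      obtain ⟨v, hv⟩ := hannc _ h2
      rw [Ideal.mem_span_singleton]
      exact ⟨u + v, by rw [mul_add, ← hv]; ring⟩
  · -- d = r * c : extend ιF along R/Rr ↪ R/Rd
    obtain ⟨c, hc⟩ := hrd
    have hannc : ∀ s : R, s * c = 0 → r ∣ s := by
      intro s hs
      rcases dvd_total r s with h | h
      · exact h
      · obtain ⟨e, he⟩ := h
        exfalso
        apply hd
        rw [hc, he]
        calc s * e * c = s * c * e := by ring
          _ = 0 := by rw [hs, zero_mul]
    set L : R →ₗ[R] (R ⧸ Ideal.span {d}) :=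
      LinearMap.toSpanSingleton R _ (Submodule.Quotient.mk c) with hL
    have hLapp : ∀ x : R, L x = Submodule.Quotient.mk (x * c) := by
      intro x
      rw [hL]
      show x • (Submodule.Quotient.mk c : R ⧸ Ideal.span {d}) = _
      rw [← Submodule.Quotient.mk_smul, smul_eq_mul]
    have hker1 : Ideal.span {r} ≤ ker L := by
      intro x hx
      obtain ⟨u, hu⟩ := Ideal.mem_span_singleton.mp hx
      rw [mem_ker, hLapp, Submodule.Quotient.mk_eq_zero, Ideal.mem_span_singleton]
      exact ⟨u, by rw [hu, hc]; ring⟩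
    have hker2 : ker L ≤ Ideal.span {r} := by
      intro x hx
      rw [mem_ker, hLapp, Submodule.Quotient.mk_eq_zero, Ideal.mem_span_singleton] at hx
      obtain ⟨u, hu⟩ := hx
      have h2 : (x - r * u) * c = 0 := by
        calc (x - r * u) * c = x * c - r * c * u := by ring
          _ = 0 := by rw [hu, hc]; ring
      obtain ⟨v, hv⟩ := hannc _ h2
      rw [Ideal.mem_span_singleton]
      exact ⟨u + v, by rw [mul_add, ← hv]; ring⟩
    set j : (R ⧸ Ideal.span {r}) →ₗ[R] (R ⧸ Ideal.span {d}) :=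
      Submodule.liftQ _ L hker1 with hj
    have hjapp : ∀ x : R, j (Submodule.Quotient.mk x) = Submodule.Quotient.mk (x * c) := by
      intro x
      rw [hj, Submodule.liftQ_apply, hLapp]
    have hjinj : Function.Injective j := by
      rw [← ker_eq_bot]
      exact Submodule.ker_liftQ_eq_bot _ _ _ hker2
    obtain ⟨H, hH⟩ := hFinj.out j hjinj ιF
    refine ⟨H (Submodule.Quotient.mk 1), ?_, ?_⟩
    · rw [← map_smul]
      have : d • (Submodule.Quotient.mk (1 : R) : R ⧸ Ideal.span {d}) = 0 := by
        have h1 : d • (Submodule.Quotient.mk (1 : R) : R ⧸ Ideal.span {d})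
            = Submodule.Quotient.mk (d * 1) := rfl
        rw [h1, mul_one, Submodule.Quotient.mk_eq_zero]
        exact Ideal.mem_span_singleton_self d
      rw [this, map_zero]
    · -- H is injective
      have tot : ∀ N₁ N₂ : Submodule R (R ⧸ Ideal.span {d}), N₁ ≤ N₂ ∨ N₂ ≤ N₁ := by
        intro N₁ N₂
        have hs := Submodule.mkQ_surjective (Ideal.span {d})
        rcases hval (Submodule.comap (Submodule.mkQ _) N₁)
            (Submodule.comap (Submodule.mkQ _) N₂) with h | h
        · exact Or.inl ((Submodule.comap_le_comap_iff_of_surjective hs).mp h)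
        · exact Or.inr ((Submodule.comap_le_comap_iff_of_surjective hs).mp h)
      have hHinj : ∀ z : R ⧸ Ideal.span {d}, H z = 0 → z = 0 := by
        rcases tot (ker H) (range j) with h | h
        · intro z hz
          obtain ⟨z', hz'⟩ := h (mem_ker.mpr hz)
          have : ιF z' = 0 := by rw [← hH z', hz', hz]
          have : z' = 0 := hιF (by rw [this, map_zero])
          rw [← hz', this, map_zero]
        · exfalso
          have hmem : j (Submodule.Quotient.mk 1) ∈ ker H := h ⟨_, rfl⟩
          rw [mem_ker, hH] at hmem
          exact hone (hιF (by rw [hmem, map_zero]))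
      intro t ht
      rw [← map_smul] at ht
      have h1 : t • (Submodule.Quotient.mk (1 : R) : R ⧸ Ideal.span {d})
          = Submodule.Quotient.mk t := by
        show Submodule.Quotient.mk (t * 1) = _
        rw [mul_one]
      have := hHinj _ ht
      rw [h1, Submodule.Quotient.mk_eq_zero] at this
      exact this

end AuxLemmas

open TensorProduct LinearMap Function

/-- Over a valuation ring `R` with maximal ideal `P`, for every locally
injective module `G` there is a pure exact sequence `0 → K → I → G → 0` where `I` is a
direct sum of copies of `E = E(R)` and `F = E(R/Rr)` (`0 ≠ r ∈ P`). Purity of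
`K = ker φ` in `I` is expressed by injectivity of `M ⊗ K → M ⊗ I` for every `M`. -/
theorem stmt_8 (R : Type u) [CommRing R] [IsLocalRing R]
    (hval : IdealsTotallyOrdered R)
    (r : R) (hr : r ≠ 0) (hrP : r ∈ IsLocalRing.maximalIdeal R)
    (E : Type u) [AddCommGroup E] [Module R E]
    (ιE : R →ₗ[R] E) (hE : IsInjectiveHull R ιE)
    (F : Type u) [AddCommGroup F] [Module R F]
    (ιF : (R ⧸ Ideal.span {r}) →ₗ[R] F) (hF : IsInjectiveHull R ιF)
    (G : Type u) [AddCommGroup G] [Module R G] (hG : LocallyInjectiveModule R G) :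
    ∃ (Λ₁ Λ₂ : Type u) (φ : ((Λ₁ →₀ E) × (Λ₂ →₀ F)) →ₗ[R] G),
      Function.Surjective φ ∧
      ∀ (M : Type u) [AddCommGroup M] [Module R M],
        Function.Injective (LinearMap.lTensor M (LinearMap.ker φ).subtype) := by
  classical
  have hru : ¬IsUnit r := by
    intro h
    exact (IsLocalRing.maximalIdeal.isMaximal R).ne_top (Ideal.eq_top_of_isUnit_mem _ hrP h)
  -- E-side maps
  have hEann : ∀ t : R, t • (ιE (1 : R)) = 0 → t = 0 := by
    intro t ht
    rw [← map_smul, smul_eq_mul, mul_one] at ht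
    exact hE.2.1 (by rw [ht, map_zero])
  have HE : ∀ g : G, ∃ ψ : E →ₗ[R] G, ψ (ιE 1) = g := by
    intro g
    exact aux_extend hG (ιE 1) g (fun t ht => by rw [hEann t ht, zero_smul])
  choose ψE hψE using HE
  -- F-side maps
  have HF : ∀ p : G × R, ∃ (a : F) (ψ : F →ₗ[R] G),
      p.2 • a = 0 ∧ ((p.2 ≠ 0 ∧ ¬IsUnit p.2 ∧ p.2 • p.1 = 0) → ψ a = p.1) := by
    intro p
    by_cases hp : p.2 ≠ 0 ∧ ¬IsUnit p.2 ∧ p.2 • p.1 = 0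
    · obtain ⟨hd0, _, hdg⟩ := hp
      obtain ⟨a, ha1, ha2⟩ := aux_F_elem hval hr hru ιF hF.1 hF.2.1 hd0
      obtain ⟨ψ, hψ⟩ := aux_extend hG a p.1 (fun t ht => by
        obtain ⟨u, hu⟩ := Ideal.mem_span_singleton.mp (ha2 t ht)
        rw [hu, mul_comm, mul_smul, hdg, smul_zero])
      exact ⟨a, ψ, ha1, fun _ => hψ⟩
    · exact ⟨0, 0, smul_zero _, fun h => absurd h hp⟩
  choose aF ψF haF hψF using HF
  set φ : ((G →₀ E) × ((G × R) →₀ F)) →ₗ[R] G :=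
    LinearMap.coprod (Finsupp.lsum ℕ ψE) (Finsupp.lsum ℕ ψF) with hφ
  have hφE : ∀ (g : G) (e : E), φ (Finsupp.single g e, 0) = ψE g e := by
    intro g e
    simp [hφ, LinearMap.coprod_apply, Finsupp.lsum_single]
  have hφF : ∀ (p : G × R) (f : F), φ (0, Finsupp.single p f) = ψF p f := by
    intro p f
    simp [hφ, LinearMap.coprod_apply, Finsupp.lsum_single]
  have hsurj : Function.Surjective φ := by
    intro g
    exact ⟨(Finsupp.single g (ιE 1), 0), by rw [hφE, hψE]⟩
  have hRD : ∀ (d : R) (z : (G →₀ E) × ((G × R) →₀ F)),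
      d • z ∈ ker φ → ∃ z' ∈ ker φ, d • z' = d • z := by
    intro d z hz
    by_cases hd0 : d = 0
    · exact ⟨0, (ker φ).zero_mem, by rw [hd0, zero_smul, zero_smul]⟩
    by_cases hdu : IsUnit d
    · refine ⟨z, ?_, rfl⟩
      rw [mem_ker] at hz ⊢
      rw [map_smul] at hz
      obtain ⟨v, hv⟩ := isUnit_iff_exists_inv'.mp hdu
      calc φ z = (v * d) • φ z := by rw [hv, one_smul]
        _ = v • (d • φ z) := by rw [mul_smul]
        _ = 0 := by rw [hz, smul_zero]
    · set g := φ z with hg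
      have hdg : d • g = 0 := by rw [hg, ← map_smul]; exact mem_ker.mp hz
      set x : (G →₀ E) × ((G × R) →₀ F) := (0, Finsupp.single (g, d) (aF (g, d))) with hx
      have hφx : φ x = g := by rw [hx, hφF]; exact hψF (g, d) ⟨hd0, hdu, hdg⟩
      refine ⟨z - x, ?_, ?_⟩
      · rw [mem_ker, map_sub, hφx, ← hg, sub_self]
      · have hdx : d • x = 0 := by
          rw [hx, Prod.smul_mk, smul_zero, Finsupp.smul_single, haF (g, d),
            Finsupp.single_zero]
          rfl
        rw [smul_sub, hdx, sub_zero]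
  refine ⟨G, G × R, φ, hsurj, fun M _ _ => aux_pure (ker φ) ?_ M⟩
  intro ρ ι fρ fι a k hk y heq
  exact aux_solve hval (ker φ) hRD (Fintype.card ρ) ρ ι fρ fι rfl a k hk y heq
end

section
/- Let R be a valuation ring with maximal ideal P and set of zerodivisors Z. Then: (1) for every nonzero r ∈ P, the quotient ring R/Rr is an IF-ring; (2) for every prime ideal J properly contained in Z, the localization R_J is an IF-ring. -/
universe u

open LinearMap TensorProduct in
/-- Main engine: a chain ring in which every nonzero nonunit `a` admits `b` with
`a*b = 0` and `ann(b) ⊆ (a)` has the property that all injective modules are flat. -/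
lemma chainIF (S : Type u) [CommRing S]
    (hchain : ∀ I J : Ideal S, I ≤ J ∨ J ≤ I)
    (H : ∀ a : S, a ≠ 0 → ¬ IsUnit a →
      ∃ b : S, a * b = 0 ∧ ∀ c : S, c * b = 0 → c ∈ Ideal.span {a}) :
    ∀ (M : Type u) [AddCommGroup M] [Module S M], Module.Injective S M → Module.Flat S M := by
  intro M _ _ hinj
  have baer : Module.Baer S M := Module.Baer.of_injective hinj
  rw [Module.Flat.iff_rTensor_injective]
  intro I hI
  obtain ⟨a, rfl⟩ : ∃ a : S, I = Ideal.span {a} := by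
    obtain ⟨s, rfl⟩ := hI
    classical
    induction s using Finset.induction_on with
    | empty =>
      refine ⟨0, ?_⟩
      rw [Finset.coe_empty, Ideal.span_empty]
      exact (Ideal.span_singleton_eq_bot.mpr rfl).symm
    | @insert x s hxs ih =>
      obtain ⟨a, ha⟩ := ih
      rw [Finset.coe_insert, Ideal.span_insert, ha]
      rcases hchain (Ideal.span {x}) (Ideal.span {a}) with h | h
      · exact ⟨a, by rw [sup_eq_right.mpr h]⟩
      · exact ⟨x, by rw [sup_eq_left.mpr h]⟩
  have ha : a ∈ Ideal.span {a} := Ideal.mem_span_singleton_self a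
  have key : ∀ x : (Ideal.span {a} : Ideal S) ⊗[S] M,
      ∃ m : M, x = (⟨a, ha⟩ : Ideal.span {a}) ⊗ₜ[S] m := by
    intro x
    induction x using TensorProduct.induction_on with
    | zero => exact ⟨0, (tmul_zero _ _).symm⟩
    | tmul y m =>
      obtain ⟨s, hs⟩ := Ideal.mem_span_singleton'.mp y.2
      have hy : y = s • (⟨a, ha⟩ : Ideal.span {a}) :=
        Subtype.ext (by simp [← hs, smul_eq_mul])
      exact ⟨s • m, by rw [hy, smul_tmul]⟩
    | add x y hx hy =>
      obtain ⟨mx, rfl⟩ := hx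
      obtain ⟨my, rfl⟩ := hy
      exact ⟨mx + my, (tmul_add _ _ _).symm⟩
  rw [← LinearMap.ker_eq_bot, eq_bot_iff]
  intro x hx
  obtain ⟨m, rfl⟩ := key x
  have h0 : (a ⊗ₜ[S] m : S ⊗[S] M) = 0 := by
    have := hx
    rwa [LinearMap.mem_ker, LinearMap.rTensor_tmul] at this
  have ham : a • m = 0 := by
    have := congrArg (TensorProduct.lid S M) h0
    simpa using this
  simp only [Submodule.mem_bot]
  by_cases ha0 : a = 0
  · have : (⟨a, ha⟩ : Ideal.span {a}) = 0 := Subtype.ext ha0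
    rw [this, zero_tmul]
  by_cases hau : IsUnit a
  · obtain ⟨u, hu⟩ := hau
    have hm : m = 0 := by
      have : (↑u⁻¹ : S) • a • m = (0 : M) := by rw [ham, smul_zero]
      rwa [← mul_smul, ← hu, Units.inv_mul, one_smul] at this
    rw [hm, tmul_zero]
  obtain ⟨b, hab, hann⟩ := H a ha0 hau
  -- get m' with b • m' = m using injectivity (Baer)
  set f : S →ₗ[S] S := LinearMap.toSpanSingleton S S b with hf
  have hker : LinearMap.ker f ≤ LinearMap.ker (LinearMap.toSpanSingleton S M m) := by
    intro c hc
    rw [LinearMap.mem_ker, hf, LinearMap.toSpanSingleton_apply, smul_eq_mul] at hc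
    obtain ⟨s, hs⟩ := Ideal.mem_span_singleton'.mp (hann c hc)
    rw [LinearMap.mem_ker, LinearMap.toSpanSingleton_apply, ← hs, mul_smul, ham, smul_zero]
  set ψ : (S ⧸ LinearMap.ker f) →ₗ[S] M :=
    Submodule.liftQ (LinearMap.ker f) (LinearMap.toSpanSingleton S M m) hker with hψ
  set e := f.quotKerEquivRange with he
  obtain ⟨g, hg⟩ := baer (LinearMap.range f) (ψ ∘ₗ (e.symm : _ →ₗ[S] _))
  have hbmem : b ∈ LinearMap.range f := ⟨1, by simp [hf]⟩
  have hgb : g b = m := by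
    rw [hg b hbmem]
    have h1 : e (Submodule.Quotient.mk 1) = ⟨b, hbmem⟩ := by
      apply Subtype.ext
      rw [he, LinearMap.quotKerEquivRange_apply_mk]
      simp [hf]
    have h2 : e.symm ⟨b, hbmem⟩ = Submodule.Quotient.mk 1 := by
      rw [← h1, LinearEquiv.symm_apply_apply]
    simp only [LinearMap.coe_comp, Function.comp_apply, LinearEquiv.coe_coe]
    rw [h2, hψ, Submodule.liftQ_apply, LinearMap.toSpanSingleton_apply, one_smul]
  have hm : m = b • g 1 := by
    rw [← map_smul, smul_eq_mul, mul_one, hgb]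
  rw [hm, ← smul_tmul]
  have hba : b • (⟨a, ha⟩ : Ideal.span {a}) = 0 := by
    apply Subtype.ext
    simp [smul_eq_mul, mul_comm b a, hab]
  rw [hba, zero_tmul]


section
variable (R : Type u) [CommRing R]

lemma quot_chain (hval : ∀ I J : Ideal R, I ≤ J ∨ J ≤ I) (I0 : Ideal R) :
    ∀ I J : Ideal (R ⧸ I0), I ≤ J ∨ J ≤ I := by
  intro I J
  have hs : Function.Surjective (Ideal.Quotient.mk I0) := Ideal.Quotient.mk_surjective
  rcases hval (Ideal.comap (Ideal.Quotient.mk I0) I) (Ideal.comap (Ideal.Quotient.mk I0) J)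
    with h | h
  · left
    rw [← Ideal.map_comap_of_surjective _ hs I, ← Ideal.map_comap_of_surjective _ hs J]
    exact Ideal.map_mono h
  · right
    rw [← Ideal.map_comap_of_surjective _ hs I, ← Ideal.map_comap_of_surjective _ hs J]
    exact Ideal.map_mono h

lemma quot_H (hval : ∀ I J : Ideal R, I ≤ J ∨ J ≤ I) (r : R) (hr : r ≠ 0) :
    ∀ a : R ⧸ Ideal.span {r}, a ≠ 0 → ¬ IsUnit a →
      ∃ b, a * b = 0 ∧ ∀ c, c * b = 0 → c ∈ Ideal.span {a} := by
  intro a ha0 _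
  obtain ⟨t, rfl⟩ := Ideal.Quotient.mk_surjective a
  have ht : t ∉ Ideal.span {r} := fun h => ha0 (Ideal.Quotient.eq_zero_iff_mem.mpr h)
  obtain ⟨b', hb'⟩ : ∃ b', b' * t = r := by
    rcases hval (Ideal.span {r}) (Ideal.span {t}) with h | h
    · exact Ideal.mem_span_singleton'.mp (h (Ideal.mem_span_singleton_self r))
    · exact absurd (h (Ideal.mem_span_singleton_self t)) ht
  refine ⟨Ideal.Quotient.mk _ b', ?_, ?_⟩
  · rw [← map_mul]
    apply Ideal.Quotient.eq_zero_iff_mem.mpr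
    have : t * b' = r := by rw [mul_comm]; exact hb'
    rw [this]
    exact Ideal.mem_span_singleton_self r
  · intro c hc
    obtain ⟨x, rfl⟩ := Ideal.Quotient.mk_surjective c
    have hxb : x * b' ∈ Ideal.span {r} := by
      apply Ideal.Quotient.eq_zero_iff_mem.mp
      rw [map_mul]; exact hc
    obtain ⟨s, hs⟩ := Ideal.mem_span_singleton'.mp hxb
    have hx : (x - s * t) * b' = 0 := by linear_combination -hs - s * hb'
    have hmem : x - s * t ∈ Ideal.span {t} := by
      rcases hval (LinearMap.ker (LinearMap.toSpanSingleton R R b')) (Ideal.span {t})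
        with h | h
      · apply h
        rw [LinearMap.mem_ker, LinearMap.toSpanSingleton_apply, smul_eq_mul]
        exact hx
      · exfalso
        have ht' : t * b' = 0 := by
          have := h (Ideal.mem_span_singleton_self t)
          rwa [LinearMap.mem_ker, LinearMap.toSpanSingleton_apply, smul_eq_mul] at this
        exact hr (by rw [← hb', mul_comm]; exact ht')
    obtain ⟨d, hd⟩ := Ideal.mem_span_singleton'.mp hmem
    refine Ideal.mem_span_singleton'.mpr ⟨Ideal.Quotient.mk _ (d + s), ?_⟩
    rw [← map_mul]
    congr 1
    linear_combination hd

lemma loc_chain (hval : ∀ I J : Ideal R, I ≤ J ∨ J ≤ I) (J : Ideal R) [J.IsPrime] :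
    ∀ I K : Ideal (Localization J.primeCompl), I ≤ K ∨ K ≤ I := by
  intro I K
  set S := Localization J.primeCompl
  rcases hval (Ideal.comap (algebraMap R S) I) (Ideal.comap (algebraMap R S) K) with h | h
  · left
    rw [← IsLocalization.map_comap J.primeCompl S I, ← IsLocalization.map_comap J.primeCompl S K]
    exact Ideal.map_mono h
  · right
    rw [← IsLocalization.map_comap J.primeCompl S I, ← IsLocalization.map_comap J.primeCompl S K]
    exact Ideal.map_mono h

lemma loc_H (hval : ∀ I J : Ideal R, I ≤ J ∨ J ≤ I) (J : Ideal R) [J.IsPrime]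
    (z v : R) (hzJ : z ∉ J) (hv : v ≠ 0) (hzv : z * v = 0) :
    ∀ a : Localization J.primeCompl, a ≠ 0 → ¬ IsUnit a →
      ∃ b, a * b = 0 ∧ ∀ c, c * b = 0 → c ∈ Ideal.span {a} := by
  set S := Localization J.primeCompl
  set φ : R →+* S := algebraMap R S with hφ
  have hunits : ∀ u : J.primeCompl, IsUnit (φ u) := fun u => IsLocalization.map_units S u
  have hcancel : ∀ (u : J.primeCompl) (x y : S), x * φ u = y * φ u → x = y := by
    intro u x y h
    apply (hunits u).mul_left_cancel
    rw [mul_comm (φ u) x, mul_comm (φ u) y]; exact h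
  have core : ∀ t : R, φ t ≠ 0 → ¬ IsUnit (φ t) →
      ∃ b, φ t * b = 0 ∧ ∀ c, c * b = 0 → c ∈ Ideal.span {φ t} := by
    intro t ht0 htu
    have htJ : t ∈ J := by
      by_contra h
      exact htu (hunits ⟨t, h⟩)
    obtain ⟨w, hw⟩ : ∃ w, w * t = v := by
      rcases hval (Ideal.span {v}) (Ideal.span {t}) with h | h
      · exact Ideal.mem_span_singleton'.mp (h (Ideal.mem_span_singleton_self v))
      · exfalso
        obtain ⟨d, hd⟩ := Ideal.mem_span_singleton'.mp (h (Ideal.mem_span_singleton_self t))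
        have hzt : z * t = 0 := by linear_combination d * hzv - z * hd
        have h1 : φ z * φ t = 0 := by rw [← map_mul, hzt, map_zero]
        have h2 : φ z * φ t = φ z * 0 := by rw [h1, mul_zero]
        exact ht0 ((hunits ⟨z, hzJ⟩).mul_left_cancel h2)
    refine ⟨φ w, ?_, ?_⟩
    · rw [← map_mul]
      have htw : t * w = v := by rw [mul_comm]; exact hw
      rw [htw]
      exact (IsLocalization.map_eq_zero_iff J.primeCompl S v).mpr ⟨⟨z, hzJ⟩, hzv⟩
    · intro c hc
      obtain ⟨⟨x, u⟩, hxu⟩ := IsLocalization.surj J.primeCompl c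
      have h1 : φ (x * w) = 0 := by
        rw [map_mul, ← hxu, mul_assoc, mul_comm (φ u) (φ w), ← mul_assoc, hc, zero_mul]
      obtain ⟨u₂, hu₂⟩ := (IsLocalization.map_eq_zero_iff J.primeCompl S (x * w)).mp h1
      have hann : (↑u₂ * x : R) ∈ Ideal.span {t} := by
        rcases hval (LinearMap.ker (LinearMap.toSpanSingleton R R w)) (Ideal.span {t})
          with h | h
        · apply h
          rw [LinearMap.mem_ker, LinearMap.toSpanSingleton_apply, smul_eq_mul, mul_assoc]
          exact hu₂
        · exfalso
          have ht' : t * w = 0 := by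
            have := h (Ideal.mem_span_singleton_self t)
            rwa [LinearMap.mem_ker, LinearMap.toSpanSingleton_apply, smul_eq_mul] at this
          exact hv (by rw [← hw, mul_comm]; exact ht')
      obtain ⟨s, hs⟩ := Ideal.mem_span_singleton'.mp hann
      have h2 : c * φ (↑u₂ * ↑u) = φ s * φ t := by
        have : φ s * φ t = φ (↑u₂ * x) := by rw [← map_mul, ← hs, map_mul]
        rw [this, map_mul, map_mul, ← mul_assoc, mul_comm c (φ ↑u₂), mul_assoc, hxu]
      have hU := hunits (u₂ * u)
      refine Ideal.mem_span_singleton'.mpr ⟨↑hU.unit⁻¹ * φ s, ?_⟩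
      apply hcancel (u₂ * u)
      calc ↑hU.unit⁻¹ * φ s * φ t * φ ↑(u₂ * u)
          = (φ s * φ t) * (↑hU.unit⁻¹ * ↑hU.unit) := by
            rw [IsUnit.unit_spec]; push_cast; ring
        _ = φ s * φ t := by rw [Units.inv_mul, mul_one]
        _ = c * φ ↑(u₂ * u) := h2.symm
  intro a ha0 hau
  obtain ⟨⟨t, u⟩, htu⟩ := IsLocalization.surj J.primeCompl a
  have ht0 : φ t ≠ 0 := by
    intro h
    rw [← htu] at h
    apply ha0
    have : a * φ ↑u = 0 * φ ↑u := by rw [h, zero_mul]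
    exact hcancel u _ _ this
  have htnu : ¬ IsUnit (φ t) := by
    intro h
    rw [← htu] at h
    exact hau (isUnit_of_mul_isUnit_left h)
  obtain ⟨b, hb1, hb2⟩ := core t ht0 htnu
  refine ⟨φ ↑u * b, ?_, ?_⟩
  · rw [← mul_assoc, htu, hb1]
  · intro c hc
    have hc' : (c * φ ↑u) * b = 0 := by rw [mul_assoc]; exact hc
    obtain ⟨d, hd⟩ := Ideal.mem_span_singleton'.mp (hb2 _ hc')
    refine Ideal.mem_span_singleton'.mpr ⟨d, ?_⟩
    apply hcancel u
    rw [mul_assoc, htu, hd]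

end


/-- Over a valuation ring `R` with maximal ideal `P` and ideal of
zerodivisors `Z`: (1) `R/Rr` is an IF-ring for every nonzero `r ∈ P`; (2) `R_J` is an
IF-ring for every prime ideal `J` properly contained in `Z`. -/
theorem stmt_10 (R : Type u) [CommRing R] [IsLocalRing R]
    (hval : IdealsTotallyOrdered R)
    (Z : Ideal R) (hZ : ∀ r : R, r ∈ Z ↔ ∃ s : R, s ≠ 0 ∧ r * s = 0) :
    (∀ r : R, r ≠ 0 → r ∈ IsLocalRing.maximalIdeal R →
      IsIFRing (R ⧸ Ideal.span {r})) ∧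
    (∀ J : Ideal R, ∀ _ : J.IsPrime, J < Z →
      IsIFRing (Localization J.primeCompl)) := by
  constructor
  · intro r hr _
    exact chainIF _ (quot_chain R hval _) (quot_H R hval r hr)
  · intro J hJ hJZ
    obtain ⟨z, hzZ, hzJ⟩ := SetLike.exists_of_lt hJZ
    obtain ⟨v, hv, hzv⟩ := (hZ z).mp hzZ
    exact chainIF _ (loc_chain R hval J) (loc_H R hval J z v hzJ hv hzv)
end

section
/- Let R be a valuation ring with maximal ideal P and set of zerodivisors Z, and let E = E(R) be an injective hull of R. Then: (1) if Z ≠ P, then E = PE; (2) if Z = P, then E = R + PE and E/PE ≅ R/P. -/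
universe u

section AuxStmt11

variable {R : Type u} [CommRing R] {E : Type u} [AddCommGroup E] [Module R E]

/-- Divisibility from injectivity: if every annihilator of `q` kills `z`, then `q` divides `z`
in `E`. -/
lemma stmt11_div (hinj : Module.Injective R E) (q : R) (z : E)
    (h : ∀ t : R, t * q = 0 → t • z = 0) : ∃ e : E, q • e = z := by
  classical
  set f : R →ₗ[R] R := LinearMap.toSpanSingleton R R q with hf
  set K : Submodule R R := LinearMap.ker f with hKdef
  have hK : ∀ t : R, t ∈ K ↔ t * q = 0 := fun t => by
    simp [hKdef, hf, LinearMap.mem_ker, LinearMap.toSpanSingleton_apply, smul_eq_mul]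
  have hker : LinearMap.ker f ≤ K := le_rfl
  let j : (R ⧸ K) →ₗ[R] R := Submodule.liftQ K f hker
  have hj : Function.Injective j := by
    rw [← LinearMap.ker_eq_bot]
    exact Submodule.ker_liftQ_eq_bot K f hker le_rfl
  have hg0 : K ≤ LinearMap.ker (LinearMap.toSpanSingleton R E z) := by
    intro t ht
    rw [LinearMap.mem_ker, LinearMap.toSpanSingleton_apply]
    exact h t ((hK t).mp ht)
  let g : (R ⧸ K) →ₗ[R] E := Submodule.liftQ K (LinearMap.toSpanSingleton R E z) hg0
  obtain ⟨h', hh⟩ := hinj.out j hj g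
  refine ⟨h' 1, ?_⟩
  have h1 := hh (Submodule.Quotient.mk 1)
  have hj1 : j (Submodule.Quotient.mk (1 : R)) = q := by
    show K.liftQ f hker (Submodule.Quotient.mk 1) = q
    rw [Submodule.liftQ_apply, hf, LinearMap.toSpanSingleton_apply, one_smul]
  have hg1 : g (Submodule.Quotient.mk (1 : R)) = z := by
    show K.liftQ (LinearMap.toSpanSingleton R E z) hg0 (Submodule.Quotient.mk 1) = z
    rw [Submodule.liftQ_apply, LinearMap.toSpanSingleton_apply, one_smul]
  rw [hj1, hg1] at h1
  calc q • h' 1 = h' (q • 1) := (map_smul h' q 1).symm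
  _ = h' q := by rw [smul_eq_mul, mul_one]
  _ = z := h1

end AuxStmt11

/-- For a valuation ring `R` with maximal ideal `P`, zerodivisors `Z` and
injective hull `E = E(R)` (with embedding `ιE`): (1) if `Z ≠ P` then `E = PE`;
(2) if `Z = P` then `E = R + PE` and `E/PE ≅ R/P`. -/
theorem stmt_11 (R : Type u) [CommRing R] [IsLocalRing R]
    (hval : IdealsTotallyOrdered R)
    (Z : Ideal R) (hZ : ∀ r : R, r ∈ Z ↔ ∃ s : R, s ≠ 0 ∧ r * s = 0)
    (E : Type u) [AddCommGroup E] [Module R E]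
    (ιE : R →ₗ[R] E) (hE : IsInjectiveHull R ιE) :
    (Z ≠ IsLocalRing.maximalIdeal R →
      IsLocalRing.maximalIdeal R • (⊤ : Submodule R E) = ⊤) ∧
    (Z = IsLocalRing.maximalIdeal R →
      LinearMap.range ιE ⊔ IsLocalRing.maximalIdeal R • (⊤ : Submodule R E) = ⊤ ∧
      Nonempty ((E ⧸ IsLocalRing.maximalIdeal R • (⊤ : Submodule R E)) ≃ₗ[R]
        (R ⧸ IsLocalRing.maximalIdeal R))) := by
  classical
  obtain ⟨hinj, hιinj, hess⟩ := hE
  constructor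
  · -- Part (1): Z ≠ P implies E = PE
    intro hne
    have hZsubP : Z ≤ IsLocalRing.maximalIdeal R := by
      intro r hr
      obtain ⟨s, hs0, hrs⟩ := (hZ r).mp hr
      rw [IsLocalRing.mem_maximalIdeal, mem_nonunits_iff]
      intro hu
      obtain ⟨v, hv⟩ := hu
      apply hs0
      calc s = (↑v⁻¹ * ↑v) * s := by rw [Units.inv_mul, one_mul]
      _ = ↑v⁻¹ * (r * s) := by rw [mul_assoc, hv]
      _ = 0 := by rw [hrs, mul_zero]
    obtain ⟨p, hpP, hpZ⟩ := SetLike.exists_of_lt (lt_of_le_of_ne hZsubP hne)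
    rw [Submodule.eq_top_iff']
    intro x
    have hreg : ∀ t : R, t * p = 0 → t • x = 0 := by
      intro t ht
      by_cases ht0 : t = 0
      · rw [ht0, zero_smul]
      · exact absurd ((hZ p).mpr ⟨t, ht0, by rw [mul_comm]; exact ht⟩) hpZ
    obtain ⟨e, he⟩ := stmt11_div hinj p x hreg
    exact he ▸ Submodule.smul_mem_smul hpP Submodule.mem_top
  · -- Part (2): Z = P
    intro hZeq
    set P : Ideal R := IsLocalRing.maximalIdeal R with hPdef
    set S : Submodule R E := P • (⊤ : Submodule R E) with hSdef
    -- essentiality in usable form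
    have ess : ∀ z : E, z ≠ 0 → ∃ d s : R, d • z = ιE s ∧ ιE s ≠ 0 := by
      intro z hz
      have hsp : Submodule.span R {z} ≠ ⊥ := by
        simpa [Submodule.span_singleton_eq_bot] using hz
      obtain ⟨w, hw, hw0⟩ := (Submodule.ne_bot_iff _).mp (hess _ hsp)
      obtain ⟨hw1, hw2⟩ := Submodule.mem_inf.mp hw
      obtain ⟨d, hd⟩ := Submodule.mem_span_singleton.mp hw1
      obtain ⟨s, hs⟩ := hw2
      exact ⟨d, s, hd.trans hs.symm, by rw [hs]; exact hw0⟩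
    -- every element of S is a single product p • e
    have hSrep : ∀ x : E, x ∈ S → ∃ p ∈ P, ∃ e : E, p • e = x := by
      intro x hxS
      refine Submodule.smul_induction_on hxS ?_ ?_
      · intro r hr n _
        exact ⟨r, hr, n, rfl⟩
      · rintro x y ⟨p₁, hp₁, e₁, rfl⟩ ⟨p₂, hp₂, e₂, rfl⟩
        rcases hval (Ideal.span {p₁}) (Ideal.span {p₂}) with hle | hle
        · obtain ⟨c, hc⟩ :=
            Ideal.mem_span_singleton'.mp (hle (Ideal.mem_span_singleton_self p₁))
          refine ⟨p₂, hp₂, c • e₁ + e₂, ?_⟩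
          rw [smul_add, smul_smul, mul_comm p₂ c, hc]
        · obtain ⟨c, hc⟩ :=
            Ideal.mem_span_singleton'.mp (hle (Ideal.mem_span_singleton_self p₂))
          refine ⟨p₁, hp₁, e₁ + c • e₂, ?_⟩
          rw [smul_add, smul_smul, mul_comm p₁ c, hc]
    -- 1 is not in PE
    have h1S : ιE 1 ∉ S := by
      intro h1
      obtain ⟨p, hp, e, hpe⟩ := hSrep _ h1
      obtain ⟨s, hs0, hps⟩ := (hZ p).mp (by rw [hZeq]; exact hp)
      apply hs0
      apply hιinj
      rw [map_zero]
      calc ιE s = s • ιE 1 := by rw [← map_smul, smul_eq_mul, mul_one]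
      _ = s • (p • e) := by rw [hpe]
      _ = (s * p) • e := by rw [smul_smul]
      _ = 0 := by rw [mul_comm, hps, zero_smul]
    -- (L4): if z ∉ S is killed by a, then a kills all of P
    have hL4 : ∀ z : E, z ∉ S → ∀ a : R, a • z = 0 → ∀ p ∈ P, a * p = 0 := by
      intro z hzS a haz p hp
      rcases hval (LinearMap.ker (LinearMap.toSpanSingleton R R p))
          (LinearMap.ker (LinearMap.toSpanSingleton R E z)) with hle | hle
      · exfalso
        have hdiv : ∀ t : R, t * p = 0 → t • z = 0 := by
          intro t ht
          have htm : t ∈ LinearMap.ker (LinearMap.toSpanSingleton R R p) := by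
            simp [LinearMap.mem_ker, LinearMap.toSpanSingleton_apply, smul_eq_mul, ht]
          simpa [LinearMap.mem_ker, LinearMap.toSpanSingleton_apply] using hle htm
        obtain ⟨e, he⟩ := stmt11_div hinj p z hdiv
        exact hzS (he ▸ Submodule.smul_mem_smul hp Submodule.mem_top)
      · have ham : a ∈ LinearMap.ker (LinearMap.toSpanSingleton R E z) := by
          simp [LinearMap.mem_ker, LinearMap.toSpanSingleton_apply, haz]
        simpa [LinearMap.mem_ker, LinearMap.toSpanSingleton_apply, smul_eq_mul] using hle ham
    -- Lemma E: over a valuation ring with Z = P, ann-divisibility implies divisibility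
    have hLemE : ∀ g u : R, (∀ t : R, t * g = 0 → t * u = 0) → ∃ r : R, g * r = u := by
      intro g u hann
      rcases hval (Ideal.span {u}) (Ideal.span {g}) with hle | hle
      · obtain ⟨r, hr⟩ := Ideal.mem_span_singleton'.mp (hle (Ideal.mem_span_singleton_self u))
        exact ⟨r, by rw [mul_comm]; exact hr⟩
      · obtain ⟨t, ht⟩ := Ideal.mem_span_singleton'.mp (hle (Ideal.mem_span_singleton_self g))
        by_cases htu : IsUnit t
        · obtain ⟨v, hv⟩ := htu
          refine ⟨↑v⁻¹, ?_⟩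
          calc g * ↑v⁻¹ = (t * u) * ↑v⁻¹ := by rw [ht]
          _ = (↑v * ↑v⁻¹) * u := by rw [hv]; ring
          _ = u := by rw [Units.mul_inv, one_mul]
        · have htP : t ∈ P := by rw [IsLocalRing.mem_maximalIdeal, mem_nonunits_iff]; exact htu
          obtain ⟨e, he0, hte⟩ := (hZ t).mp (by rw [hZeq]; exact htP)
          rcases hval (Ideal.span {e}) (Ideal.span {u}) with hle2 | hle2
          · obtain ⟨c, hc⟩ :=
              Ideal.mem_span_singleton'.mp (hle2 (Ideal.mem_span_singleton_self e))
            exfalso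
            apply he0
            have hcg : c * g = 0 := by
              calc c * g = c * (t * u) := by rw [ht]
              _ = t * (c * u) := by ring
              _ = t * e := by rw [hc]
              _ = 0 := hte
            rw [← hc]
            exact hann c hcg
          · obtain ⟨c, hc⟩ :=
              Ideal.mem_span_singleton'.mp (hle2 (Ideal.mem_span_singleton_self u))
            have hg0 : g = 0 := by
              calc g = t * u := ht.symm
              _ = t * (c * e) := by rw [hc]
              _ = c * (t * e) := by ring
              _ = 0 := by rw [hte, mul_zero]
            have hu0 : u = 0 := by
              have := hann 1 (by rw [one_mul, hg0])
              rwa [one_mul] at this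
            exact ⟨0, by rw [mul_zero, hu0]⟩
    set T : Submodule R E := LinearMap.range ιE ⊔ S with hTdef
    have hrangeT : ∀ r : R, ιE r ∈ T := fun r => Submodule.mem_sup_left ⟨r, rfl⟩
    have hST : S ≤ T := le_sup_right
    have hmemT : ∀ x : E, x ∈ T := by
      intro x
      by_contra hx
      have hx0 : x ≠ 0 := fun h => hx (h ▸ T.zero_mem)
      obtain ⟨b, a, hba, hane⟩ := ess x hx0
      have ha0 : a ≠ 0 := fun h => hane (by rw [h, map_zero])
      have hb0 : b ≠ 0 := fun h => hane (by rw [← hba, h, zero_smul])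
      have hbP : b ∈ P := by
        rw [IsLocalRing.mem_maximalIdeal, mem_nonunits_iff]
        intro hbu
        obtain ⟨v, hv⟩ := hbu
        apply hx
        have hxe : x = ιE (↑v⁻¹ * a) := by
          calc x = (↑v⁻¹ * b) • x := by rw [← hv, Units.inv_mul, one_smul]
          _ = (↑v⁻¹ : R) • (b • x) := by rw [mul_smul]
          _ = (↑v⁻¹ : R) • ιE a := by rw [hba]
          _ = ιE (↑v⁻¹ * a) := by rw [← map_smul, smul_eq_mul]
        rw [hxe]
        exact hrangeT _
      have haS : ιE a ∈ S := hba ▸ Submodule.smul_mem_smul hbP Submodule.mem_top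
      have haP : a ∈ P := by
        rw [IsLocalRing.mem_maximalIdeal, mem_nonunits_iff]
        intro hau
        obtain ⟨v, hv⟩ := hau
        apply h1S
        have h1e : ιE 1 = (↑v⁻¹ : R) • ιE a := by
          rw [← map_smul, smul_eq_mul, ← hv, Units.inv_mul]
        rw [h1e]
        exact S.smul_mem _ haS
      -- main line: a unit multiple v of x with a • (ιE 1 - v • x) = 0 gives a contradiction
      have main : ∀ v : R, IsUnit v → a • (ιE 1 - v • x) = 0 → False := by
        intro v hv haw
        obtain ⟨vu, hvu⟩ := hv
        set w : E := ιE 1 - v • x with hwdef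
        have hvx : v • x ∉ T := by
          intro hvT
          apply hx
          have : x = (↑vu⁻¹ : R) • (v • x) := by
            rw [smul_smul, ← hvu, Units.inv_mul, one_smul]
          rw [this]
          exact T.smul_mem _ hvT
        have hwsub : ∀ r : R, w - ιE r ∉ S := by
          intro r hrS
          apply hvx
          have hveq : v • x = ιE (1 - r) - (w - ιE r) := by
            rw [hwdef, map_sub]
            abel
          rw [hveq]
          exact T.sub_mem (hrangeT _) (hST hrS)
        have hwS : w ∉ S := by
          have := hwsub 0
          simpa using this
        have hnle : ¬ (LinearMap.ker (LinearMap.toSpanSingleton R R a) ≤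
            LinearMap.ker (LinearMap.toSpanSingleton R E w)) := by
          intro hle
          have hdiv : ∀ t : R, t * a = 0 → t • w = 0 := by
            intro t ht
            have htm : t ∈ LinearMap.ker (LinearMap.toSpanSingleton R R a) := by
              simp [LinearMap.mem_ker, LinearMap.toSpanSingleton_apply, smul_eq_mul, ht]
            simpa [LinearMap.mem_ker, LinearMap.toSpanSingleton_apply] using hle htm
          obtain ⟨e, he⟩ := stmt11_div hinj a w hdiv
          exact hwS (he ▸ Submodule.smul_mem_smul haP Submodule.mem_top)
        obtain ⟨p, hpk, hpw⟩ := SetLike.not_le_iff_exists.mp hnle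
        have hpa : p * a = 0 := by
          simpa [LinearMap.mem_ker, LinearMap.toSpanSingleton_apply, smul_eq_mul] using hpk
        have hpw' : p • w ≠ 0 := by
          simpa [LinearMap.mem_ker, LinearMap.toSpanSingleton_apply] using hpw
        have hpP : p ∈ P := by
          rw [← hZeq]
          exact (hZ p).mpr ⟨a, ha0, hpa⟩
        obtain ⟨d, u, hdu, hune⟩ := ess (p • w) hpw'
        set g : R := d * p with hgdef
        have hgw : g • w = ιE u := by rw [hgdef, mul_smul, hdu]
        have hgP : g ∈ P := Ideal.mul_mem_left _ d hpP
        have hu0 : u ≠ 0 := fun h => hune (by rw [h, map_zero])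
        have hg0 : g ≠ 0 := fun h => hune (by rw [← hgw, h, zero_smul])
        have hann : ∀ t : R, t * g = 0 → t * u = 0 := by
          intro t htg
          apply hιinj
          rw [map_zero, ← smul_eq_mul, map_smul, ← hgw, smul_smul, htg, zero_smul]
        obtain ⟨r, hr⟩ := hLemE g u hann
        have hgwr : g • (w - ιE r) = 0 := by
          rw [smul_sub, hgw, ← map_smul, smul_eq_mul, hr, sub_self]
        have key2 := hL4 _ (hwsub r) g hgwr
        rcases hval (Ideal.span {g}) (Ideal.span {a}) with hle | hle
        · obtain ⟨f, hf⟩ :=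
            Ideal.mem_span_singleton'.mp (hle (Ideal.mem_span_singleton_self g))
          apply hune
          rw [← hgw, ← hf, mul_smul, haw, smul_zero]
        · obtain ⟨f, hf⟩ :=
            Ideal.mem_span_singleton'.mp (hle (Ideal.mem_span_singleton_self a))
          have h2 : a • (w - ιE r) = 0 := by
            rw [← hf, mul_smul, hgwr, smul_zero]
          have har : a * r = 0 := by
            apply hιinj
            rw [map_zero, ← smul_eq_mul, map_smul]
            have := h2
            rw [smul_sub, haw, zero_sub, neg_eq_zero] at this
            exact this
          by_cases hru : IsUnit r
          · obtain ⟨ru, hru'⟩ := hru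
            apply ha0
            calc a = (a * r) * ↑ru⁻¹ := by rw [mul_assoc, ← hru', Units.mul_inv, mul_one]
            _ = 0 := by rw [har, zero_mul]
          · have hrP : r ∈ P := by
              rw [IsLocalRing.mem_maximalIdeal, mem_nonunits_iff]; exact hru
            apply hu0
            rw [← hr]
            exact key2 r hrP
      -- case analysis comparing (a) and (b)
      rcases hval (Ideal.span {a}) (Ideal.span {b}) with hle | hle
      · obtain ⟨c, hc⟩ := Ideal.mem_span_singleton'.mp (hle (Ideal.mem_span_singleton_self a))
        by_cases hcu : IsUnit c
        · obtain ⟨cu, hcu'⟩ := hcu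
          apply main (↑cu⁻¹) (Units.isUnit _)
          have h1 : a • ((↑cu⁻¹ : R) • x) = b • x := by
            rw [smul_smul]
            congr 1
            calc a * ↑cu⁻¹ = (c * b) * ↑cu⁻¹ := by rw [hc]
            _ = (↑cu * ↑cu⁻¹) * b := by rw [hcu']; ring
            _ = b := by rw [Units.mul_inv, one_mul]
          rw [smul_sub, h1, hba, ← map_smul, smul_eq_mul, mul_one, sub_self]
        · have hcP : c ∈ P := by
            rw [IsLocalRing.mem_maximalIdeal, mem_nonunits_iff]; exact hcu
          have hz : b • (x - ιE c) = 0 := by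
            rw [smul_sub, hba, ← map_smul, smul_eq_mul, mul_comm b c, hc, sub_self]
          have hzS : x - ιE c ∉ S := by
            intro hm
            apply hx
            have : x = (x - ιE c) + ιE c := by abel
            rw [this]
            exact T.add_mem (hST hm) (hrangeT c)
          have hbc := hL4 _ hzS b hz c hcP
          exact ha0 (by rw [← hc, mul_comm, hbc])
      · obtain ⟨c, hc⟩ := Ideal.mem_span_singleton'.mp (hle (Ideal.mem_span_singleton_self b))
        by_cases hcu : IsUnit c
        · apply main c hcu
          have h1 : a • (c • x) = b • x := by
            rw [smul_smul, mul_comm a c, hc]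
          rw [smul_sub, h1, hba, ← map_smul, smul_eq_mul, mul_one, sub_self]
        · have hcP : c ∈ P := by
            rw [IsLocalRing.mem_maximalIdeal, mem_nonunits_iff]; exact hcu
          have hz : a • (ιE 1 - c • x) = 0 := by
            rw [smul_sub, smul_smul, mul_comm a c, hc, hba, ← map_smul, smul_eq_mul,
              mul_one, sub_self]
          have hzS : ιE 1 - c • x ∉ S := by
            intro hm
            apply h1S
            have : ιE 1 = (ιE 1 - c • x) + c • x := by abel
            rw [this]
            exact S.add_mem hm (Submodule.smul_mem_smul hcP Submodule.mem_top)
          have hac := hL4 _ hzS a hz c hcP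
          exact hb0 (by rw [← hc, mul_comm, hac])
    have htop : T = ⊤ := Submodule.eq_top_iff'.mpr hmemT
    refine ⟨htop, ?_⟩
    -- the isomorphism E/PE ≃ R/P
    set f : R →ₗ[R] E ⧸ S := S.mkQ.comp ιE with hfdef
    have hkerf : LinearMap.ker f = P := by
      ext t
      simp only [hfdef, LinearMap.mem_ker, LinearMap.comp_apply, Submodule.mkQ_apply,
        Submodule.Quotient.mk_eq_zero]
      constructor
      · intro ht
        by_contra htP
        have htu : IsUnit t := by
          by_contra htu
          exact htP ((IsLocalRing.mem_maximalIdeal t).mpr htu)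
        obtain ⟨v, hv⟩ := htu
        apply h1S
        have h1e : ιE 1 = (↑v⁻¹ : R) • ιE t := by
          rw [← map_smul, smul_eq_mul, ← hv, Units.inv_mul]
        rw [h1e]
        exact S.smul_mem _ ht
      · intro ht
        have : ιE t = t • ιE 1 := by rw [← map_smul, smul_eq_mul, mul_one]
        rw [this]
        exact Submodule.smul_mem_smul ht Submodule.mem_top
    have hfsurj : Function.Surjective f := by
      intro y
      obtain ⟨e, rfl⟩ := S.mkQ_surjective y
      have heT : e ∈ T := hmemT e
      obtain ⟨e₁, he₁, e₂, he₂, heq⟩ := Submodule.mem_sup.mp heT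
      obtain ⟨r, rfl⟩ := he₁
      refine ⟨r, ?_⟩
      calc f r = S.mkQ (ιE r) := rfl
      _ = S.mkQ (ιE r) + S.mkQ e₂ := by
          have h0 : S.mkQ e₂ = 0 := by simp [he₂]
          rw [h0, add_zero]
      _ = S.mkQ (ιE r + e₂) := (map_add _ _ _).symm
      _ = S.mkQ e := by rw [heq]
    have hPlef : P ≤ LinearMap.ker f := le_of_eq hkerf.symm
    set g' : (R ⧸ P) →ₗ[R] E ⧸ S := Submodule.liftQ P f hPlef with hg'def
    have hg'inj : Function.Injective g' := by
      rw [← LinearMap.ker_eq_bot]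
      exact Submodule.ker_liftQ_eq_bot P f hPlef (le_of_eq hkerf)
    have hg'surj : Function.Surjective g' := by
      intro y
      obtain ⟨r, hrr⟩ := hfsurj y
      exact ⟨Submodule.Quotient.mk r, by rw [hg'def, Submodule.liftQ_apply]; exact hrr⟩
    exact ⟨(LinearEquiv.ofBijective g' ⟨hg'inj, hg'surj⟩).symm⟩
end

section
/- Let R be a valuation ring and U a uniform R-module. If x, y ∈ U satisfy x ∉ Ry and y ∉ Rx, then the submodule Rx ∩ Ry is not finitely generated. -/
universe u

lemma dvd_total_of_ito {R : Type u} [CommRing R] (hval : IdealsTotallyOrdered R) :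
    ∀ a b : R, a ∣ b ∨ b ∣ a := by
  intro a b
  rcases hval (Ideal.span {a}) (Ideal.span {b}) with h | h
  · exact Or.inr (Ideal.span_singleton_le_span_singleton.mp h)
  · exact Or.inl (Ideal.span_singleton_le_span_singleton.mp h)

lemma exists_max_dvd {R : Type u} [CommRing R] (hd : ∀ a b : R, a ∣ b ∨ b ∣ a)
    (s : Finset R) : ∃ c : R, (c = 0 ∨ c ∈ s) ∧ ∀ r ∈ s, c ∣ r := by
  classical
  induction s using Finset.induction_on with
  | empty => exact ⟨0, Or.inl rfl, by simp⟩
  | @insert a s ha ih =>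
    obtain ⟨c, hc, hdvd⟩ := ih
    rcases hd c a with h1 | h1
    · refine ⟨c, ?_, ?_⟩
      · rcases hc with h | h
        · exact Or.inl h
        · exact Or.inr (Finset.mem_insert_of_mem h)
      · intro r hr
        rcases Finset.mem_insert.mp hr with h | h
        · exact h ▸ h1
        · exact hdvd r h
    · refine ⟨a, Or.inr (Finset.mem_insert_self a s), ?_⟩
      intro r hr
      rcases Finset.mem_insert.mp hr with h | h
      · exact h ▸ dvd_rfl
      · exact dvd_trans h1 (hdvd r h)

lemma aux_case {R : Type u} [CommRing R] (hd : ∀ a b : R, a ∣ b ∨ b ∣ a)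
    {U : Type u} [AddCommGroup U] [Module R U] (hU : UniformModule R U)
    (x y : U) (a b r : R) (hab : a = r * b) (hw : a • x = b • y)
    (hw0 : a • x ≠ 0)
    (hW : Submodule.span R {x} ⊓ Submodule.span R {y} ≤ Submodule.span R {a • x})
    (hy : y ∉ Submodule.span R {x}) : False := by
  have hx0 : x ≠ 0 := fun h => hw0 (by rw [h, smul_zero])
  set z := r • x - y with hzdef
  have hbz : b • z = 0 := by
    rw [hzdef, smul_sub, smul_smul, mul_comm, ← hab, hw, sub_self]
  have hz : z ≠ 0 := by
    intro h
    exact hy (Submodule.mem_span_singleton.mpr ⟨r, sub_eq_zero.mp h⟩)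
  have hint := hU (Submodule.span R {z}) (Submodule.span R {x})
    (by rwa [Ne, Submodule.span_singleton_eq_bot])
    (by rwa [Ne, Submodule.span_singleton_eq_bot])
  obtain ⟨v, hv, hv0⟩ := Submodule.ne_bot_iff _ |>.mp hint
  obtain ⟨s, hs⟩ := Submodule.mem_span_singleton.mp hv.1
  obtain ⟨t, ht⟩ := Submodule.mem_span_singleton.mp hv.2
  have key : s • y = (s * r - t) • x := by
    have h1 : s • (r • x) - s • y = t • x := by
      rw [← smul_sub, ← hzdef, hs, ht]
    rw [sub_smul, mul_smul, ← h1]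
    abel
  have hsy : s • y ∈ Submodule.span R {a • x} :=
    hW ⟨key ▸ Submodule.mem_span_singleton.mpr ⟨s * r - t, rfl⟩,
        Submodule.mem_span_singleton.mpr ⟨s, rfl⟩⟩
  obtain ⟨u, hu⟩ := Submodule.mem_span_singleton.mp hsy
  set n := s - u * b with hndef
  have hny : n • y = 0 := by
    rw [hndef, sub_smul, mul_smul, ← hw, hu, sub_self]
  have hnz : n • z = v := by
    rw [hndef, sub_smul, mul_smul, hbz, smul_zero, sub_zero, hs]
  rcases hd b n with h | h
  · obtain ⟨d, hdd⟩ := h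
    have : n • z = 0 := by rw [hdd, mul_comm, mul_smul, hbz, smul_zero]
    exact hv0 (hnz ▸ this.symm ▸ this)
  · obtain ⟨d, hdd⟩ := h
    have : b • y = 0 := by rw [hdd, mul_comm, mul_smul, hny, smul_zero]
    exact hw0 (hw.trans this)


/-- In a uniform module `U` over a valuation ring, if `x ∉ Ry` and
`y ∉ Rx` then `Rx ∩ Ry` is not finitely generated. -/
theorem stmt_12 (R : Type u) [CommRing R] (hval : IdealsTotallyOrdered R)
    (U : Type u) [AddCommGroup U] [Module R U] (hU : UniformModule R U)
    (x y : U) (hx : x ∉ Submodule.span R {y}) (hy : y ∉ Submodule.span R {x}) :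
    ¬ (Submodule.span R {x} ⊓ Submodule.span R {y}).FG := by
  classical
  intro hFG
  have hd := dvd_total_of_ito hval
  set W := Submodule.span R (M := U) {x} ⊓ Submodule.span R {y} with hWdef
  obtain ⟨s, hs⟩ := hFG
  have hx0 : x ≠ 0 := fun h => hx (h ▸ Submodule.zero_mem _)
  have hy0 : y ≠ 0 := fun h => hy (h ▸ Submodule.zero_mem _)
  have hWbot : W ≠ ⊥ :=
    hU _ _ (by rwa [Ne, Submodule.span_singleton_eq_bot])
      (by rwa [Ne, Submodule.span_singleton_eq_bot])
  have hsub : (↑s : Set U) ⊆ W := hs ▸ Submodule.subset_span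
  let g : U → R := fun u => if h : ∃ r : R, r • x = u then h.choose else 0
  have hg : ∀ u ∈ (↑s : Set U), g u • x = u := by
    intro u hu
    have hux : ∃ r : R, r • x = u := Submodule.mem_span_singleton.mp (hsub hu).1
    simp only [g, dif_pos hux]
    exact hux.choose_spec
  obtain ⟨c, hc, hcd⟩ := exists_max_dvd hd (s.image g)
  have hwW : c • x ∈ W := by
    rcases hc with h | h
    · rw [h, zero_smul]; exact Submodule.zero_mem _
    · obtain ⟨u, hu, hgu⟩ := Finset.mem_image.mp h
      have h2 := hg u hu
      rw [hgu] at h2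
      rw [h2]
      exact hsub hu
  have hWw : W ≤ Submodule.span R {c • x} := by
    rw [← hs, Submodule.span_le]
    intro u hu
    obtain ⟨d, hdd⟩ := hcd (g u) (Finset.mem_image_of_mem g hu)
    show u ∈ Submodule.span R {c • x}
    exact Submodule.mem_span_singleton.mpr
      ⟨d, by rw [smul_smul, mul_comm, ← hdd, hg u hu]⟩
  have hw0 : c • x ≠ 0 := by
    intro h
    rw [h, Submodule.span_zero_singleton] at hWw
    exact hWbot (le_bot_iff.mp hWw)
  obtain ⟨b, hb⟩ := Submodule.mem_span_singleton.mp hwW.2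
  rcases hd c b with h | h
  · obtain ⟨d, hdd⟩ := h
    refine aux_case hd hU y x b c d (by rw [hdd, mul_comm]) hb ?_ ?_ hx
    · rw [hb]; exact hw0
    · rw [hb, inf_comm]; exact hWw
  · obtain ⟨d, hdd⟩ := h
    exact aux_case hd hU x y c b d (by rw [hdd, mul_comm]) hb.symm hw0 hWw hy
end
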